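/- arXiv:2409.18635 — 5 statements merged into one kernel-verified Lean document; each statement's English description precedes it below -/
import Mathlib

section
/- Let A = {a_n} and B = {b_n} be two sequences of positive integers, let ψ: ℕ → (0,1) be a positive function, and let s ∈ (0,1). If Σ_{n=1}^∞ [ a_n (ψ(n)/a_n)^s + b_n (ψ(n)/b_n)^s ] < ∞, then the (1+s)-dimensional Hausdorff measure of W×_{A,B}(ψ) is zero. -/
open MeasureTheory Filter Set

/-- Distance from a real number to the nearest integer. -/
noncomputable def nint (x : ℝ) : ℝ := |x - (round x : ℝ)|

/-!
The set lies in the limsup of the sets `E n` where `‖a n x‖ ‖b n y‖ < ψ n`, so by a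
Borel–Cantelli argument for the approximate Hausdorff measures `H^{1+s}_r` it suffices to bound
`H^{1+s}_r (E n)` by a constant times the `n`-th summand once `ψ n` is small.
Choosing `k` with `2⁻ᵏ⁻¹ < ‖a x‖ ≤ 2⁻ᵏ` forces `‖b y‖ < 2ᵏ⁺¹ ψ`; hence `E n` is covered,
for each `k ≤ log₂ (1 / ψ)`, by `(a + 1)(b + 1)` rectangles with half-sides `2⁻ᵏ / a` and
`2ᵏ⁺¹ ψ / b`. A rectangle with sides `α ≤ β` is covered by about `β / α` squares of side `α`, at
cost `β α ^ s`, and the two resulting geometric series in `k` add up to `a (ψ / a) ^ s` and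
`b (ψ / b) ^ s`, up to a factor depending only on `s`.
-/

open Metric
open scoped ENNReal Topology

section HausdorffCantelli

variable {X : Type*} [EMetricSpace X]

/-- The `r`-approximate `d`-dimensional Hausdorff outer measure `H^d_r`. -/
noncomputable def approxHausdorff (d : ℝ) (r : ℝ≥0∞) : OuterMeasure X :=
  OuterMeasure.mkMetric'.pre (fun S => ediam S ^ d) r

theorem approxHausdorff_le_ediam_rpow {d : ℝ} {r : ℝ≥0∞} {S : Set X} (hS : ediam S ≤ r) :
    approxHausdorff d r S ≤ ediam S ^ d :=
  OuterMeasure.mkMetric'.pre_le hS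

theorem hausdorffMeasure_eq_iSup_approxHausdorff [MeasurableSpace X] [BorelSpace X] (d : ℝ)
    (S : Set X) : μH[d] S = ⨆ r > 0, approxHausdorff d r S := by
  rw [Measure.hausdorffMeasure, ← OuterMeasure.coe_mkMetric]
  simp only [OuterMeasure.mkMetric, OuterMeasure.mkMetric', OuterMeasure.iSup_apply]
  rfl

theorem hausdorffMeasure_limsup_eq_zero [MeasurableSpace X] [BorelSpace X] {d : ℝ}
    {E : ℕ → Set X} {c : ℕ → ℝ≥0∞} (hc : ∑' n, c n ≠ ∞)
    (hE : ∀ r > 0, ∀ᶠ n in atTop, approxHausdorff d r (E n) ≤ c n) :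
    μH[d] (limsup E atTop) = 0 := by
  simp only [hausdorffMeasure_eq_iSup_approxHausdorff, ENNReal.iSup_eq_zero]
  intro r hr
  obtain ⟨N, hN⟩ := eventually_atTop.1 (hE r hr)
  rw [← limsup_nat_add E N]
  refine measure_limsup_atTop_eq_zero (ne_top_of_le_ne_top hc ?_)
  calc ∑' n, approxHausdorff d r (E (n + N))
      ≤ ∑' n, c (n + N) := ENNReal.tsum_le_tsum fun n => hN _ (Nat.le_add_left N n)
    _ ≤ ∑' n, c n := ENNReal.tsum_comp_le_tsum_of_injective (add_left_injective N) c

end HausdorffCantelli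

theorem closedBall_subset_biUnion_closedBall (x : ℝ) {α h : ℝ} (hh : 0 < h) :
    closedBall x α ⊆
      ⋃ i ∈ Finset.range (⌊α / h⌋₊ + 1), closedBall (x - α + (2 * i + 1) * h) h := by
  intro y hy
  rw [mem_closedBall, Real.dist_eq, abs_le] at hy
  set z := (y - x + α) / (2 * h)
  have hz : 0 ≤ z := div_nonneg (by linarith) (by positivity)
  have hlo : (⌊z⌋₊ : ℝ) * (2 * h) ≤ y - x + α := (le_div_iff₀ (by positivity)).1 (Nat.floor_le hz)
  have hhi : y - x + α < (⌊z⌋₊ + 1) * (2 * h) :=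
    (div_lt_iff₀ (by positivity)).1 (Nat.lt_floor_add_one z)
  refine mem_iUnion₂.2 ⟨⌊z⌋₊, Finset.mem_range.2 (Nat.lt_succ_of_le (Nat.floor_le_floor ?_)), ?_⟩
  · rw [div_le_div_iff₀ (by positivity) hh]
    nlinarith
  · rw [mem_closedBall, Real.dist_eq, abs_le]
    constructor <;> nlinarith

theorem approxHausdorff_closedBall_prod_le {d : ℝ} (hd : 0 ≤ d) {r : ℝ≥0∞} (x y : ℝ)
    {α β h : ℝ} (hh : 0 < h) (hr : ENNReal.ofReal (2 * h) ≤ r) :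
    approxHausdorff d r (closedBall x α ×ˢ closedBall y β) ≤
      ENNReal.ofReal ((⌊α / h⌋₊ + 1) * (⌊β / h⌋₊ + 1) * (2 * h) ^ d) := by
  set I := Finset.range (⌊α / h⌋₊ + 1) ×ˢ Finset.range (⌊β / h⌋₊ + 1)
  have hcover : closedBall x α ×ˢ closedBall y β ⊆
      ⋃ ij ∈ I, closedBall (x - α + (2 * ij.1 + 1) * h, y - β + (2 * ij.2 + 1) * h) h := by
    rintro ⟨u, v⟩ ⟨hu, hv⟩
    obtain ⟨i, hi, hui⟩ := mem_iUnion₂.1 (closedBall_subset_biUnion_closedBall x hh hu)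
    obtain ⟨j, hj, hvj⟩ := mem_iUnion₂.1 (closedBall_subset_biUnion_closedBall y hh hv)
    exact mem_iUnion₂.2 ⟨(i, j), Finset.mem_product.2 ⟨hi, hj⟩,
      by rw [← closedBall_prod_same]; exact ⟨hui, hvj⟩⟩
  have hball (p : ℝ × ℝ) : approxHausdorff d r (closedBall p h) ≤ ENNReal.ofReal ((2 * h) ^ d) := by
    have hdiam : ediam (closedBall p h) ≤ ENNReal.ofReal (2 * h) := by
      rw [← closedEBall_ofReal hh.le, ENNReal.ofReal_mul zero_le_two, ENNReal.ofReal_ofNat]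
      exact ediam_closedEBall_le
    calc approxHausdorff d r (closedBall p h)
        ≤ ediam (closedBall p h) ^ d := approxHausdorff_le_ediam_rpow (hdiam.trans hr)
      _ ≤ ENNReal.ofReal (2 * h) ^ d := ENNReal.rpow_le_rpow hdiam hd
      _ = ENNReal.ofReal ((2 * h) ^ d) := ENNReal.ofReal_rpow_of_nonneg (by positivity) hd
  calc approxHausdorff d r (closedBall x α ×ˢ closedBall y β)
      ≤ ∑ ij ∈ I, approxHausdorff d r
          (closedBall (x - α + (2 * ij.1 + 1) * h, y - β + (2 * ij.2 + 1) * h) h) :=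
        (measure_mono hcover).trans (measure_biUnion_finset_le _ _)
    _ ≤ ∑ _ij ∈ I, ENNReal.ofReal ((2 * h) ^ d) := Finset.sum_le_sum fun ij _ => hball _
    _ = ENNReal.ofReal ((⌊α / h⌋₊ + 1) * (⌊β / h⌋₊ + 1) * (2 * h) ^ d) := by
      rw [Finset.sum_const, nsmul_eq_mul, ← ENNReal.ofReal_natCast,
        ← ENNReal.ofReal_mul (Nat.cast_nonneg _)]
      simp [I]

theorem floor_div_add_one_mul_rpow_le {s α β : ℝ} (hs1 : s ≤ 1) (hα : 0 < α) (hαβ : α ≤ β) :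
    (⌊β / α⌋₊ + 1 : ℝ) * (2 * α) ^ (1 + s) ≤ 8 * (β * α ^ s) := by
  have hfloor : (⌊β / α⌋₊ : ℝ) * α ≤ β :=
    (le_div_iff₀ hα).1 (Nat.floor_le (div_nonneg (hα.le.trans hαβ) hα.le))
  have h2s : (2 : ℝ) ^ s ≤ 2 := by
    simpa using Real.rpow_le_rpow_of_exponent_le one_le_two hs1
  calc (⌊β / α⌋₊ + 1 : ℝ) * (2 * α) ^ (1 + s)
      = 2 * 2 ^ s * ((⌊β / α⌋₊ * α + α) * α ^ s) := by
        rw [Real.rpow_add (by positivity), Real.rpow_one, Real.mul_rpow zero_le_two hα.le]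
        ring
    _ ≤ 2 * 2 * ((β + β) * α ^ s) := by gcongr
    _ = 8 * (β * α ^ s) := by ring

theorem approxHausdorff_closedBall_prod_le_of_min {s : ℝ} (hs0 : 0 ≤ s) (hs1 : s ≤ 1)
    {r : ℝ≥0∞} (x y : ℝ) {α β : ℝ} (hα : 0 < α) (hβ : 0 < β)
    (hr : ENNReal.ofReal (2 * min α β) ≤ r) :
    approxHausdorff (1 + s) r (closedBall x α ×ˢ closedBall y β) ≤
      ENNReal.ofReal (16 * (α * β ^ s + β * α ^ s)) := by
  refine (approxHausdorff_closedBall_prod_le (by linarith) x y (lt_min hα hβ) hr).trans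
    (ENNReal.ofReal_le_ofReal ?_)
  have hαs : 0 ≤ α * β ^ s := by positivity
  have hβs : 0 ≤ β * α ^ s := by positivity
  rcases le_total α β with h | h
  · rw [min_eq_left h, div_self hα.ne', Nat.floor_one]
    linarith [floor_div_add_one_mul_rpow_le hs1 hα h]
  · rw [min_eq_right h, div_self hβ.ne', Nat.floor_one]
    linarith [floor_div_add_one_mul_rpow_le hs1 hβ h]

/-- `W×_{A,B}(ψ)` is the limsup over `n` of `multApproxSet (a n) (b n) (ψ n)`. -/
def multApproxSet (a b : ℕ) (ψ : ℝ) : Set (ℝ × ℝ) :=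
  {p | p.1 ∈ Icc 0 1 ∧ p.2 ∈ Icc 0 1 ∧ nint (a * p.1) * nint (b * p.2) < ψ}

theorem exists_mem_closedBall_div_of_nint_le {a : ℕ} (ha : 0 < a) {x ρ : ℝ} (hx : x ∈ Icc 0 1)
    (h : nint (a * x) ≤ ρ) : ∃ p ∈ Finset.range (a + 1), x ∈ closedBall ((p : ℝ) / a) (ρ / a) := by
  have ha' : (0 : ℝ) < a := Nat.cast_pos.2 ha
  have h0 : 0 ≤ round ((a : ℝ) * x) := by
    rw [round_eq]
    exact Int.floor_nonneg.2 (by nlinarith [hx.1])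
  have h1 : round ((a : ℝ) * x) ≤ a := by
    rw [round_eq, Int.floor_le_iff]
    push_cast
    nlinarith [hx.2]
  refine ⟨(round ((a : ℝ) * x)).toNat, Finset.mem_range.2 (by omega), ?_⟩
  have hp : ((round ((a : ℝ) * x)).toNat : ℝ) = round ((a : ℝ) * x) := by
    exact_mod_cast Int.toNat_of_nonneg h0
  have hsub : x - round ((a : ℝ) * x) / a = (a * x - round ((a : ℝ) * x)) / a := by
    field_simp
  rw [mem_closedBall, Real.dist_eq, hp, hsub, abs_div, abs_of_pos ha']
  exact div_le_div_of_nonneg_right h ha'.le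

theorem exists_dyadic_split_of_mul_lt {u w ψ : ℝ} {K : ℕ} (hu0 : 0 ≤ u) (hu1 : u ≤ 1)
    (hw : w ≤ 1) (huw : u * w < ψ) (hK : 1 < 2 ^ (K + 1) * ψ) :
    ∃ k ∈ Finset.range (K + 1), u ≤ (2 ^ k)⁻¹ ∧ w ≤ 2 * 2 ^ k * ψ := by
  rcases le_or_gt (u * 2 ^ K) 1 with huK | huK
  · refine ⟨K, Finset.self_mem_range_succ K, ?_, by rw [← pow_succ']; linarith⟩
    rwa [← one_div, le_div_iff₀ (by positivity)]
  · obtain rfl | hu := hu0.eq_or_lt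
    · exact absurd huK (by norm_num)
    obtain ⟨k, hk, hk'⟩ := exists_nat_pow_near (one_le_one_div hu hu1) one_lt_two
    rw [le_div_iff₀ hu] at hk
    rw [div_lt_iff₀ hu] at hk'
    have hkK : k < K + 1 := by
      have : (2 : ℝ) ^ k < 2 ^ K := by nlinarith
      exact Nat.lt_succ_of_lt ((pow_lt_pow_iff_right₀ one_lt_two).1 this)
    refine ⟨k, Finset.mem_range.2 hkK, ?_, ?_⟩
    · rwa [← one_div, le_div_iff₀ (by positivity), mul_comm]
    · rw [pow_succ'] at hk'
      rcases le_or_gt w 0 with hw0 | hw0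
      · have hψ : 0 < ψ := by nlinarith [pow_pos (two_pos (α := ℝ)) (K + 1)]
        have : 0 < 2 * 2 ^ k * ψ := by positivity
        linarith
      · have h2k : (0 : ℝ) < 2 * 2 ^ k := by positivity
        nlinarith [mul_lt_mul_of_pos_left hk' hw0, mul_lt_mul_of_pos_left huw h2k]

theorem multApproxSet_subset_biUnion {a b : ℕ} (ha : 0 < a) (hb : 0 < b) {ψ : ℝ} {K : ℕ}
    (hK : 1 < 2 ^ (K + 1) * ψ) :
    multApproxSet a b ψ ⊆ ⋃ k ∈ Finset.range (K + 1), ⋃ p ∈ Finset.range (a + 1),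
      ⋃ q ∈ Finset.range (b + 1),
        closedBall ((p : ℝ) / a) ((2 ^ k)⁻¹ / a) ×ˢ
          closedBall ((q : ℝ) / b) (2 * 2 ^ k * ψ / b) := by
  rintro ⟨x, y⟩ ⟨hx, hy, hxy⟩
  obtain ⟨k, hk, hu, hw⟩ := exists_dyadic_split_of_mul_lt (abs_nonneg _)
    ((abs_sub_round _).trans (by norm_num)) ((abs_sub_round _).trans (by norm_num)) hxy hK
  obtain ⟨p, hp, hxp⟩ := exists_mem_closedBall_div_of_nint_le ha hx hu
  obtain ⟨q, hq, hyq⟩ := exists_mem_closedBall_div_of_nint_le hb hy hw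
  simp only [mem_iUnion, exists_prop]
  exact ⟨k, hk, p, hp, q, hq, hxp, hyq⟩

theorem mul_rectangle_cost_eq {s a b ψ T : ℝ} (ha : 0 < a) (hb : 0 < b) (hψ : 0 < ψ)
    (hT : 0 < T) :
    a * b * (T⁻¹ / a * (2 * T * ψ / b) ^ s + 2 * T * ψ / b * (T⁻¹ / a) ^ s) =
      2 ^ s * T ^ (s - 1) * (b * (ψ / b) ^ s) + 2 * (T * ψ) ^ (1 - s) * (a * (ψ / a) ^ s) := by
  rw [Real.div_rpow (by positivity) hb.le, Real.mul_rpow (by positivity) hψ.le,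
    Real.mul_rpow zero_le_two hT.le, Real.div_rpow (by positivity) ha.le, Real.inv_rpow hT.le,
    Real.rpow_sub hT, Real.rpow_sub (by positivity), Real.rpow_one, Real.rpow_one,
    Real.mul_rpow hT.le hψ.le, Real.div_rpow hψ.le hb.le, Real.div_rpow hψ.le ha.le]
  field_simp

theorem sum_range_two_pow_rpow_le {s : ℝ} (hs : s < 1) (n : ℕ) :
    ∑ k ∈ Finset.range n, ((2 : ℝ) ^ k) ^ (s - 1) ≤ (1 - 2 ^ (s - 1))⁻¹ := by
  have hq1 : (2 : ℝ) ^ (s - 1) < 1 := Real.rpow_lt_one_of_one_lt_of_neg one_lt_two (by linarith)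
  calc ∑ k ∈ Finset.range n, ((2 : ℝ) ^ k) ^ (s - 1)
      = ∑ k ∈ Finset.Ico 0 n, ((2 : ℝ) ^ (s - 1)) ^ k := by
        rw [Finset.range_eq_Ico]
        refine Finset.sum_congr rfl fun k _ => ?_
        rw [← Real.rpow_natCast_mul zero_le_two, mul_comm, Real.rpow_mul_natCast zero_le_two]
    _ ≤ (1 - 2 ^ (s - 1))⁻¹ := by
        refine (geom_sum_Ico_le_of_lt_one (by positivity) hq1).trans_eq ?_
        rw [pow_zero, one_div]

theorem sum_range_two_pow_mul_rpow_le {s ψ : ℝ} {K : ℕ} (hs : s < 1) (hψ : 0 ≤ ψ)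
    (hK : 2 ^ K * ψ ≤ 1) :
    ∑ k ∈ Finset.range (K + 1), ((2 : ℝ) ^ k * ψ) ^ (1 - s) ≤ (1 - 2 ^ (s - 1))⁻¹ := by
  calc ∑ k ∈ Finset.range (K + 1), ((2 : ℝ) ^ k * ψ) ^ (1 - s)
      ≤ ∑ k ∈ Finset.range (K + 1), ((2 : ℝ) ^ (K + 1 - 1 - k)) ^ (s - 1) := by
        refine Finset.sum_le_sum fun k hk => ?_
        have hkK : k ≤ K := Nat.lt_succ_iff.1 (Finset.mem_range.1 hk)
        have hsplit : (2 : ℝ) ^ k * 2 ^ (K + 1 - 1 - k) = 2 ^ K := by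
          rw [← pow_add]; congr 1; omega
        have hle : (2 : ℝ) ^ k * ψ ≤ (2 ^ (K + 1 - 1 - k))⁻¹ := by
          rw [← one_div, le_div_iff₀ (by positivity)]
          nlinarith
        calc ((2 : ℝ) ^ k * ψ) ^ (1 - s) ≤ ((2 ^ (K + 1 - 1 - k))⁻¹) ^ (1 - s) :=
              Real.rpow_le_rpow (by positivity) hle (by linarith)
          _ = ((2 : ℝ) ^ (K + 1 - 1 - k)) ^ (s - 1) := by
              rw [Real.inv_rpow (by positivity), ← Real.rpow_neg (by positivity), neg_sub]
    _ = ∑ k ∈ Finset.range (K + 1), ((2 : ℝ) ^ k) ^ (s - 1) :=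
        Finset.sum_range_reflect (fun k => ((2 : ℝ) ^ k) ^ (s - 1)) (K + 1)
    _ ≤ (1 - 2 ^ (s - 1))⁻¹ := sum_range_two_pow_rpow_le hs _

theorem sum_dyadic_rectangle_cost_le {s a b ψ : ℝ} {K : ℕ} (hs1 : s < 1)
    (ha : 1 ≤ a) (hb : 1 ≤ b) (hψ : 0 < ψ) (hK : 2 ^ K * ψ ≤ 1) :
    ∑ k ∈ Finset.range (K + 1), (a + 1) * (b + 1) * (16 * ((2 ^ k)⁻¹ / a * (2 * 2 ^ k * ψ / b) ^ s
        + 2 * 2 ^ k * ψ / b * ((2 ^ k)⁻¹ / a) ^ s)) ≤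
      128 * (1 - 2 ^ (s - 1))⁻¹ * (a * (ψ / a) ^ s + b * (ψ / b) ^ s) := by
  set A := a * (ψ / a) ^ s
  set B := b * (ψ / b) ^ s
  have h2s : (2 : ℝ) ^ s ≤ 2 := by
    simpa using Real.rpow_le_rpow_of_exponent_le one_le_two hs1.le
  have hterm (k : ℕ) : (a + 1) * (b + 1) * (16 * ((2 ^ k)⁻¹ / a * (2 * 2 ^ k * ψ / b) ^ s
      + 2 * 2 ^ k * ψ / b * ((2 ^ k)⁻¹ / a) ^ s)) ≤
      128 * (((2 : ℝ) ^ k) ^ (s - 1) * B + ((2 : ℝ) ^ k * ψ) ^ (1 - s) * A) := by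
    have hcost := mul_rectangle_cost_eq (s := s) (zero_lt_one.trans_le ha)
      (zero_lt_one.trans_le hb) hψ (pow_pos (two_pos (α := ℝ)) k)
    have hab : (a + 1) * (b + 1) ≤ 4 * (a * b) := by nlinarith
    have hX : 0 ≤ (2 ^ k)⁻¹ / a * (2 * 2 ^ k * ψ / b) ^ s
        + 2 * 2 ^ k * ψ / b * ((2 ^ k)⁻¹ / a) ^ s := by positivity
    have hT : 0 ≤ ((2 : ℝ) ^ k) ^ (s - 1) * B := by positivity
    nlinarith [mul_le_mul_of_nonneg_right hab hX, mul_le_mul_of_nonneg_right h2s hT]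
  calc _ ≤ ∑ k ∈ Finset.range (K + 1),
        128 * (((2 : ℝ) ^ k) ^ (s - 1) * B + ((2 : ℝ) ^ k * ψ) ^ (1 - s) * A) :=
        Finset.sum_le_sum fun k _ => hterm k
    _ = 128 * (B * ∑ k ∈ Finset.range (K + 1), ((2 : ℝ) ^ k) ^ (s - 1) +
          A * ∑ k ∈ Finset.range (K + 1), ((2 : ℝ) ^ k * ψ) ^ (1 - s)) := by
        rw [← Finset.mul_sum, Finset.sum_add_distrib, ← Finset.sum_mul, ← Finset.sum_mul]
        ring
    _ ≤ 128 * (B * (1 - 2 ^ (s - 1))⁻¹ + A * (1 - 2 ^ (s - 1))⁻¹) := by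
        gcongr
        · exact sum_range_two_pow_rpow_le hs1 _
        · exact sum_range_two_pow_mul_rpow_le hs1 hψ.le hK
    _ = 128 * (1 - 2 ^ (s - 1))⁻¹ * (A + B) := by ring

theorem min_le_sqrt_mul {α β : ℝ} (hα : 0 ≤ α) (hβ : 0 ≤ β) : min α β ≤ √(α * β) :=
  (Real.le_sqrt (le_min hα hβ) (mul_nonneg hα hβ)).2 <| by
    rw [sq]; exact mul_le_mul (min_le_left _ _) (min_le_right _ _) (le_min hα hβ) hα

theorem min_dyadic_rectangle_le {a b ψ : ℝ} (ha : 1 ≤ a) (hb : 1 ≤ b) (hψ : 0 ≤ ψ) (k : ℕ) :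
    min ((2 ^ k)⁻¹ / a) (2 * 2 ^ k * ψ / b) ≤ √(2 * ψ) := by
  have hprod : (2 ^ k)⁻¹ / a * (2 * 2 ^ k * ψ / b) = 2 * ψ / (a * b) := by
    field_simp
  refine (min_le_sqrt_mul (by positivity) (by positivity)).trans (Real.sqrt_le_sqrt ?_)
  rw [hprod]
  exact div_le_self (by positivity) (one_le_mul_of_one_le_of_one_le ha hb)

theorem approxHausdorff_multApproxSet_le {s : ℝ} (hs0 : 0 ≤ s) (hs1 : s < 1) {a b : ℕ}
    (ha : 0 < a) (hb : 0 < b) {ψ : ℝ} (hψ0 : 0 < ψ) (hψ1 : ψ ≤ 1) {r : ℝ≥0∞}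
    (hr : ENNReal.ofReal (2 * √(2 * ψ)) ≤ r) :
    approxHausdorff (1 + s) r (multApproxSet a b ψ) ≤
      ENNReal.ofReal (128 * (1 - 2 ^ (s - 1))⁻¹ * (a * (ψ / a) ^ s + b * (ψ / b) ^ s)) := by
  obtain ⟨K, hK, hK'⟩ := exists_nat_pow_near (one_le_one_div hψ0 hψ1) one_lt_two
  rw [le_div_iff₀ hψ0] at hK
  rw [div_lt_iff₀ hψ0] at hK'
  have ha' : (1 : ℝ) ≤ a := Nat.one_le_cast.2 ha
  have hb' : (1 : ℝ) ≤ b := Nat.one_le_cast.2 hb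
  set R₁ : ℕ → ℝ := fun k => (2 ^ k)⁻¹ / a
  set R₂ : ℕ → ℝ := fun k => 2 * 2 ^ k * ψ / b
  have hR₁ (k : ℕ) : 0 < R₁ k := by positivity
  have hR₂ (k : ℕ) : 0 < R₂ k := by positivity
  have hdiam (k : ℕ) : ENNReal.ofReal (2 * min (R₁ k) (R₂ k)) ≤ r :=
    le_trans (ENNReal.ofReal_le_ofReal (by linarith [min_dyadic_rectangle_le ha' hb' hψ0.le k])) hr
  calc approxHausdorff (1 + s) r (multApproxSet a b ψ)
      ≤ ∑ k ∈ Finset.range (K + 1), ∑ p ∈ Finset.range (a + 1), ∑ q ∈ Finset.range (b + 1),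
          approxHausdorff (1 + s) r
            (closedBall ((p : ℝ) / a) (R₁ k) ×ˢ closedBall ((q : ℝ) / b) (R₂ k)) := by
        refine (measure_mono (multApproxSet_subset_biUnion ha hb hK')).trans ?_
        refine (measure_biUnion_finset_le _ _).trans (Finset.sum_le_sum fun k _ => ?_)
        refine (measure_biUnion_finset_le _ _).trans (Finset.sum_le_sum fun p _ => ?_)
        exact measure_biUnion_finset_le _ _
    _ ≤ ∑ k ∈ Finset.range (K + 1), ∑ p ∈ Finset.range (a + 1), ∑ q ∈ Finset.range (b + 1),
          ENNReal.ofReal (16 * (R₁ k * R₂ k ^ s + R₂ k * R₁ k ^ s)) := by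
        gcongr with k _ p _ q _
        exact approxHausdorff_closedBall_prod_le_of_min hs0 hs1.le _ _ (hR₁ k) (hR₂ k) (hdiam k)
    _ = ENNReal.ofReal (∑ k ∈ Finset.range (K + 1),
          (a + 1) * (b + 1) * (16 * (R₁ k * R₂ k ^ s + R₂ k * R₁ k ^ s))) := by
        rw [ENNReal.ofReal_sum_of_nonneg fun k _ => by positivity]
        refine Finset.sum_congr rfl fun k _ => ?_
        have hcard : ((a : ℝ) + 1) * (b + 1) = ((a + 1) * (b + 1) : ℕ) := by push_cast; ring
        rw [hcard, ENNReal.ofReal_mul (Nat.cast_nonneg _), ENNReal.ofReal_natCast]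
        simp [mul_assoc]
    _ ≤ _ := ENNReal.ofReal_le_ofReal (sum_dyadic_rectangle_cost_le hs1 ha' hb' hψ0 hK)

theorem le_mul_div_rpow {x a s : ℝ} (hx0 : 0 ≤ x) (hx1 : x ≤ 1) (ha : 1 ≤ a) (hs : s ≤ 1) :
    x ≤ a * (x / a) ^ s := by
  have ha0 : 0 < a := zero_lt_one.trans_le ha
  calc x = a * (x / a) := by field_simp
    _ ≤ a * (x / a) ^ s := mul_le_mul_of_nonneg_left (Real.self_le_rpow_of_le_one
        (div_nonneg hx0 ha0.le) (div_le_one_of_le₀ (hx1.trans ha) ha0.le) hs) ha0.le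

theorem stmt2 (a b : ℕ → ℕ) (ha : ∀ n, 0 < a n) (hb : ∀ n, 0 < b n)
    (ψ : ℕ → ℝ) (hψ : ∀ n, ψ n ∈ Ioo (0 : ℝ) 1)
    (s : ℝ) (hs : s ∈ Ioo (0 : ℝ) 1)
    (hsum : Summable (fun n =>
      (a n : ℝ) * (ψ n / (a n : ℝ)) ^ s + (b n : ℝ) * (ψ n / (b n : ℝ)) ^ s)) :
    μH[1 + s] {p : ℝ × ℝ | p.1 ∈ Icc (0 : ℝ) 1 ∧ p.2 ∈ Icc (0 : ℝ) 1 ∧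
        ∃ᶠ n in atTop, nint ((a n : ℝ) * p.1) * nint ((b n : ℝ) * p.2) < ψ n} = 0 := by
  obtain ⟨hs0, hs1⟩ := hs
  set C : ℝ := 128 * (1 - 2 ^ (s - 1))⁻¹
  have hC : 0 ≤ C := mul_nonneg (by norm_num) (inv_nonneg.2 (sub_nonneg.2
    (Real.rpow_le_one_of_one_le_of_nonpos one_le_two (by linarith))))
  have hψ_le (n : ℕ) : ψ n ≤ (a n : ℝ) * (ψ n / a n) ^ s + b n * (ψ n / b n) ^ s := by
    have hψ01 := hψ n
    linarith [hψ01.1, le_mul_div_rpow hψ01.1.le hψ01.2.le (Nat.one_le_cast.2 (ha n)) hs1.le,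
      le_mul_div_rpow hψ01.1.le hψ01.2.le (Nat.one_le_cast.2 (hb n)) hs1.le]
  have hψ_lim : Tendsto ψ atTop (𝓝 0) :=
    squeeze_zero (fun n => (hψ n).1.le) hψ_le hsum.tendsto_atTop_zero
  have hdiam_lim : Tendsto (fun n => ENNReal.ofReal (2 * √(2 * ψ n))) atTop (𝓝 0) := by
    simpa using ENNReal.tendsto_ofReal ((hψ_lim.const_mul 2).sqrt.const_mul 2)
  have hW : {p : ℝ × ℝ | p.1 ∈ Icc (0 : ℝ) 1 ∧ p.2 ∈ Icc (0 : ℝ) 1 ∧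
      ∃ᶠ n in atTop, nint ((a n : ℝ) * p.1) * nint ((b n : ℝ) * p.2) < ψ n} ⊆
      limsup (fun n => multApproxSet (a n) (b n) (ψ n)) atTop := fun p hp =>
    mem_limsup_iff_frequently_mem.2 (hp.2.2.mono fun n hn => ⟨hp.1, hp.2.1, hn⟩)
  refine measure_mono_null hW (hausdorffMeasure_limsup_eq_zero
      (c := fun n => ENNReal.ofReal (C * ((a n : ℝ) * (ψ n / a n) ^ s + b n * (ψ n / b n) ^ s)))
      ?_ fun r hr => ?_)
  · rw [← ENNReal.ofReal_tsum_of_nonneg (fun n => mul_nonneg hC ((hψ n).1.le.trans (hψ_le n)))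
      (hsum.mul_left C)]
    exact ENNReal.ofReal_ne_top
  · filter_upwards [ENNReal.tendsto_nhds_zero.1 hdiam_lim r hr] with n hn
    exact approxHausdorff_multApproxSet_le hs0.le hs1 (ha n) (hb n) (hψ n).1 (hψ n).2.le hn
end

section
/- Let a, b be positive integers, ρ, η ∈ (0,1), and 0 < s ≤ 1. Define E_{a,b}(ρ,η) = { (x,y) ∈ [0,1]² : ‖ax‖ < ρ and ‖by‖ < η }. Then the (1+s)-dimensional Hausdorff content of E_{a,b}(ρ,η) is at most 64·ρ·η·min{ρ/a, η/b}^{s-1}. -/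
/-!
Every point of the set lies within `ρ / a` horizontally and `η / b` vertically of a grid point
`(p / a, q / b)` with `0 ≤ p ≤ a`, `0 ≤ q ≤ b`. Put `m = min (ρ / a) (η / b)` and cut each of these
`(a + 1) (b + 1)` rectangles into `⌈ρ / (a m)⌉ ⌈η / (b m)⌉` squares of side `2 m`. Since
`a + 1 ≤ 2 a` and `⌈x⌉ ≤ 2 x` for `x ≥ 1`, there are at most `16 ρ η / m ^ 2` squares, and each
contributes `(2 m) ^ (1 + s) ≤ 4 m ^ 2 m ^ (s - 1)` (the metric on `ℝ × ℝ` is the sup metric).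
-/

open MeasureTheory Filter Set ENNReal

/-- The `t`-dimensional Hausdorff content of a subset of the plane. -/
noncomputable def hContent2 (t : ℝ) (A : Set (ℝ × ℝ)) : ℝ≥0∞ :=
  ⨅ (U : ℕ → Set (ℝ × ℝ)) (_ : A ⊆ ⋃ i, U i), ∑' i, EMetric.diam (U i) ^ t

open Function Metric

lemma hContent2_le_tsum {t : ℝ} (ht : 0 < t) {A : Set (ℝ × ℝ)} {ι : Type*} [Countable ι]
    (V : ι → Set (ℝ × ℝ)) (hV : A ⊆ ⋃ i, V i) :
    hContent2 t A ≤ ∑' i, ediam (V i) ^ t := by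
  obtain ⟨f, hf⟩ := exists_injective_nat ι
  set U : ℕ → Set (ℝ × ℝ) := extend f V fun _ ↦ ∅
  have hUV : ∀ i, U (f i) = V i := hf.extend_apply V _
  -- padding with empty sets is free because `0 ^ t = 0`
  have hsum : ∀ n, ediam (U n) ^ t = extend f (fun i ↦ ediam (V i) ^ t) 0 n := fun n ↦ by
    rw [apply_extend (fun W ↦ ediam W ^ t)]
    simp [Function.comp_def, zero_rpow_of_pos ht, Pi.zero_def]
  calc hContent2 t A ≤ ∑' n, ediam (U n) ^ t :=
        iInf₂_le U (hV.trans <| iUnion_subset fun i ↦ hUV i ▸ subset_iUnion U (f i))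
    _ = ∑' i, ediam (V i) ^ t := by simp_rw [hsum]; exact tsum_extend_zero hf _

lemma hContent2_le_card_mul {t d : ℝ} (ht : 0 < t) (hd : 0 ≤ d) {A : Set (ℝ × ℝ)} {ι : Type*}
    [Fintype ι] (V : ι → Set (ℝ × ℝ)) (hV : A ⊆ ⋃ i, V i)
    (hVd : ∀ i, ediam (V i) ≤ ENNReal.ofReal d) :
    hContent2 t A ≤ ENNReal.ofReal (Fintype.card ι * d ^ t) := by
  calc hContent2 t A ≤ ∑' i, ediam (V i) ^ t := hContent2_le_tsum ht V hV
    _ = ∑ i, ediam (V i) ^ t := tsum_fintype _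
    _ ≤ Fintype.card ι • ENNReal.ofReal (d ^ t) :=
        Finset.sum_le_card_nsmul _ _ _ fun i _ ↦ by
          rw [← ofReal_rpow_of_nonneg hd ht.le]
          exact rpow_le_rpow (hVd i) ht.le
    _ = ENNReal.ofReal (Fintype.card ι * d ^ t) := by
        rw [nsmul_eq_mul, ofReal_mul (by positivity), ofReal_natCast]

lemma ediam_prod_le {α β : Type*} [PseudoEMetricSpace α] [PseudoEMetricSpace β]
    (s : Set α) (t : Set β) : ediam (s ×ˢ t) ≤ max (ediam s) (ediam t) :=
  ediam_le fun _ hx _ hy ↦ max_le_max (edist_le_ediam_of_mem hx.1 hy.1)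
    (edist_le_ediam_of_mem hx.2 hy.2)

lemma exists_mem_Icc_natCast_mul {ℓ z : ℝ} (hℓ : 0 < ℓ) (hz : 0 ≤ z) {C : ℕ} (hC : C ≠ 0)
    (hzC : z ≤ C * ℓ) : ∃ j : Fin C, z ∈ Icc (j * ℓ) (j * ℓ + ℓ) := by
  refine ⟨⟨min ⌊z / ℓ⌋₊ (C - 1), by omega⟩, ?_, ?_⟩
  · calc ((min ⌊z / ℓ⌋₊ (C - 1) : ℕ) : ℝ) * ℓ ≤ ⌊z / ℓ⌋₊ * ℓ := by gcongr; exact min_le_left ..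
      _ ≤ z := (le_div_iff₀ hℓ).1 (Nat.floor_le (div_nonneg hz hℓ.le))
  · rcases le_total ⌊z / ℓ⌋₊ (C - 1) with h | h
    · have := (div_lt_iff₀ hℓ).1 (Nat.lt_floor_add_one (z / ℓ))
      simp only [min_eq_left h]
      linarith
    · simp only [min_eq_right h, Nat.cast_sub (Nat.one_le_iff_ne_zero.2 hC)]
      push_cast
      linarith

lemma exists_abs_sub_div_lt_of_nint_lt {n : ℕ} (hn : 0 < n) {x ρ : ℝ} (hx : x ∈ Icc 0 1)
    (hρ : nint (n * x) < ρ) : ∃ p : Fin (n + 1), |x - p / n| < ρ / n := by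
  have hn' : (0 : ℝ) < n := by exact_mod_cast hn
  have hr0 : 0 ≤ round ((n : ℝ) * x) := by
    rw [round_eq]
    exact Int.floor_nonneg.2 (by nlinarith [hx.1])
  have hrn : round ((n : ℝ) * x) ≤ n := by
    rw [round_eq]
    exact Int.floor_le_iff.2 (by push_cast; nlinarith [hx.2])
  refine ⟨⟨(round ((n : ℝ) * x)).toNat, by omega⟩, ?_⟩
  have hr : (((round ((n : ℝ) * x)).toNat : ℕ) : ℝ) = round ((n : ℝ) * x) := by
    exact_mod_cast Int.toNat_of_nonneg hr0
  calc |x - ((round ((n : ℝ) * x)).toNat : ℕ) / n|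
        = |((n : ℝ) * x - round ((n : ℝ) * x)) / n| := by rw [hr]; congr 1; field_simp
    _ = nint (n * x) / n := by rw [abs_div, abs_of_pos hn', nint]
    _ < ρ / n := by gcongr

/-- The `j`-th of the `⌈ρ / n / m⌉₊` consecutive intervals of length `2 m` that cover
`[p / n - ρ / n, p / n + ρ / n]`, for `i = (p, j)`. -/
def gridCell (n : ℕ) (ρ m : ℝ) (i : Fin (n + 1) × Fin ⌈ρ / n / m⌉₊) : Set ℝ :=
  Icc (i.1 / n - ρ / n + i.2 * (2 * m)) (i.1 / n - ρ / n + i.2 * (2 * m) + 2 * m)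

lemma mem_iUnion_gridCell {n : ℕ} (hn : 0 < n) {ρ m x : ℝ} (hm : 0 < m) (hx : x ∈ Icc 0 1)
    (hρ : nint (n * x) < ρ) : x ∈ ⋃ i, gridCell n ρ m i := by
  obtain ⟨p, hp⟩ := exists_abs_sub_div_lt_of_nint_lt hn hx hρ
  have hρn : 0 < ρ / n := (abs_nonneg _).trans_lt hp
  rw [abs_lt] at hp
  have hceil : ρ / n ≤ ⌈ρ / n / m⌉₊ * m := (div_le_iff₀ hm).1 (Nat.le_ceil _)
  obtain ⟨j, hj⟩ := exists_mem_Icc_natCast_mul (ℓ := 2 * m) (z := x - (p / n - ρ / n))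
    (C := ⌈ρ / n / m⌉₊) (by positivity) (by linarith) (Nat.ceil_pos.2 (by positivity)).ne'
    (by linarith)
  exact mem_iUnion.2 ⟨(p, j), by simp only [gridCell, mem_Icc] at hj ⊢; constructor <;> linarith⟩

lemma card_gridCell_mul_le {n : ℕ} (hn : 0 < n) {ρ m : ℝ} (hm : 0 < m) (hmρ : m ≤ ρ / n) :
    ((n + 1) * ⌈ρ / n / m⌉₊ : ℝ) * m ≤ 4 * ρ := by
  have hn' : (1 : ℝ) ≤ n := by exact_mod_cast hn
  have hceil : (⌈ρ / n / m⌉₊ : ℝ) ≤ 2 * (ρ / n / m) :=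
    Nat.ceil_le_two_mul <| le_trans (by norm_num) ((one_le_div hm).2 hmρ)
  calc ((n + 1) * ⌈ρ / n / m⌉₊ : ℝ) * m ≤ (2 * n) * (2 * (ρ / n / m)) * m := by gcongr; linarith
    _ = 4 * ρ := by field_simp; ring

lemma two_mul_rpow_one_add_le {m s : ℝ} (hm : 0 < m) (hs : s ≤ 1) :
    (2 * m) ^ (1 + s) ≤ 4 * m ^ 2 * m ^ (s - 1) := by
  have h2 : (2 : ℝ) ^ (1 + s) ≤ 4 :=
    calc (2 : ℝ) ^ (1 + s) ≤ 2 ^ (2 : ℝ) :=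
          Real.rpow_le_rpow_of_exponent_le one_le_two (by linarith)
      _ = 4 := by norm_num
  calc (2 * m) ^ (1 + s) = 2 ^ (1 + s) * (m ^ (2 : ℝ) * m ^ (s - 1)) := by
        rw [Real.mul_rpow zero_le_two hm.le, ← Real.rpow_add hm]
        ring_nf
    _ ≤ 4 * m ^ 2 * m ^ (s - 1) := by
        rw [Real.rpow_two, ← mul_assoc]
        gcongr

theorem stmt5 (a b : ℕ) (ha : 0 < a) (hb : 0 < b)
    (ρ η : ℝ) (hρ : ρ ∈ Ioo (0 : ℝ) 1) (hη : η ∈ Ioo (0 : ℝ) 1)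
    (s : ℝ) (hs0 : 0 < s) (hs1 : s ≤ 1) :
    hContent2 (1 + s) {p : ℝ × ℝ | p.1 ∈ Icc (0 : ℝ) 1 ∧ p.2 ∈ Icc (0 : ℝ) 1 ∧
        nint ((a : ℝ) * p.1) < ρ ∧ nint ((b : ℝ) * p.2) < η} ≤
      ENNReal.ofReal (64 * ρ * η * min (ρ / a) (η / b) ^ (s - 1)) := by
  set m := min (ρ / a) (η / b)
  have hm : 0 < m := lt_min (div_pos hρ.1 (by positivity)) (div_pos hη.1 (by positivity))
  have hcov : {p : ℝ × ℝ | p.1 ∈ Icc (0 : ℝ) 1 ∧ p.2 ∈ Icc (0 : ℝ) 1 ∧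
      nint ((a : ℝ) * p.1) < ρ ∧ nint ((b : ℝ) * p.2) < η} ⊆
      ⋃ i : _ × _, gridCell a ρ m i.1 ×ˢ gridCell b η m i.2 := by
    rintro p ⟨hx, hy, hax, hby⟩
    obtain ⟨i, hi⟩ := mem_iUnion.1 (mem_iUnion_gridCell ha hm hx hax)
    obtain ⟨j, hj⟩ := mem_iUnion.1 (mem_iUnion_gridCell hb hm hy hby)
    exact mem_iUnion.2 ⟨(i, j), hi, hj⟩
  have hdiam : ∀ i : _ × _, ediam (gridCell a ρ m i.1 ×ˢ gridCell b η m i.2) ≤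
      ENNReal.ofReal (2 * m) :=
    fun i ↦ (ediam_prod_le _ _).trans <| by simp [gridCell, Real.ediam_Icc]
  have hX := card_gridCell_mul_le ha hm (min_le_left _ _)
  have hY := card_gridCell_mul_le hb hm (min_le_right _ _)
  refine (hContent2_le_card_mul (by linarith) (by positivity) _ hcov hdiam).trans
    (ofReal_le_ofReal ?_)
  simp only [Fintype.card_prod, Fintype.card_fin]
  push_cast
  calc _ ≤ (a + 1) * ⌈ρ / a / m⌉₊ * ((b + 1) * ⌈η / b / m⌉₊) * (4 * m ^ 2 * m ^ (s - 1)) := by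
        gcongr; exact two_mul_rpow_one_add_le hm hs1
    _ = 4 * (((a + 1) * ⌈ρ / a / m⌉₊ : ℝ) * m) * (((b + 1) * ⌈η / b / m⌉₊ : ℝ) * m) *
          m ^ (s - 1) := by ring
    _ ≤ 4 * (4 * ρ) * (4 * η) * m ^ (s - 1) := by gcongr; linarith [hρ.1]
    _ = 64 * ρ * η * m ^ (s - 1) := by ring
end

section
/- Let s ∈ (0,1). There exists a constant C₁ depending only on s such that for all positive integers a, b and all δ ∈ (0,1), the set E_{a,b}(δ) = { (x,y) ∈ [0,1]² : ‖ax‖·‖by‖ < δ² } satisfies H^{1+s}_∞(E_{a,b}(δ)) ≤ C₁ [ a (δ²/a)^s + b (δ²/b)^s ]. -/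
open MeasureTheory Filter Set ENNReal

/-!
Put `ε = δ²`. For a point `(x, y)` of the set let `j` be least with `‖ax‖ < 2 ^ (j + 1) ε`;
minimality gives `‖by‖ < 2 ^ (-j)`, so the point lies in the rectangle of width `2 ^ (j + 2) ε / a`
and height `2 ^ (1 - j) / b` centred at a grid point `(k / a, l / b)`, `0 ≤ k ≤ a`, `0 ≤ l ≤ b`.
Since `‖ax‖ ≤ 1/2`, only the levels `j ≤ J` with `2 ^ J ε ≤ 1 < 2 ^ (J + 1) ε` occur. Cutting a
rectangle into squares of side its shorter edge bounds its `(1 + s)`-content by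
`4 · area · (shorter edge) ^ (s - 1)`, and every rectangle has area `8ε / (ab)`. Summing over the
`(a + 1)(b + 1)` grid points leaves two geometric series in `j`: the one from the widths decreases
and is dominated by `j = 0`, giving `a (ε / a) ^ s`; the one from the heights increases and is
dominated by `j = J`, giving `b (ε / b) ^ s`.
-/

section OrderedField

variable {K : Type*} [Field K] [LinearOrder K] [IsStrictOrderedRing K]

theorem Nat.floor_add_one_le_two_mul [FloorSemiring K] {x : K} (hx : 1 ≤ x) :
    (⌊x⌋₊ + 1 : K) ≤ 2 * x := by
  linarith [Nat.floor_le (zero_le_one.trans hx)]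

theorem Icc_subset_biUnion_Icc [FloorSemiring K] {x₀ x₁ c : K} (hc : 0 < c) :
    Icc x₀ x₁ ⊆
      ⋃ m ∈ Finset.range (⌊(x₁ - x₀) / c⌋₊ + 1), Icc (x₀ + m * c) (x₀ + m * c + c) := by
  intro x ⟨hx₀, hx₁⟩
  have hm : ⌊(x - x₀) / c⌋₊ ≤ ⌊(x₁ - x₀) / c⌋₊ := by gcongr
  have hlow := Nat.floor_le (div_nonneg (sub_nonneg.2 hx₀) hc.le)
  have hup := Nat.lt_floor_add_one ((x - x₀) / c)
  rw [le_div_iff₀ hc] at hlow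
  rw [div_lt_iff₀ hc] at hup
  simp only [Set.mem_iUnion, Finset.mem_range, mem_Icc]
  exact ⟨_, Nat.lt_succ_of_le hm, by linarith, by linarith⟩

theorem exists_dyadic_level {u v ε : K} {J : ℕ} (hu₀ : 0 ≤ u) (hv₀ : 0 ≤ v) (hv : v < 1)
    (huv : u * v < ε) (hu : u < 2 ^ (J + 1) * ε) :
    ∃ j ≤ J, u < 2 ^ (j + 1) * ε ∧ v < (2 ^ j)⁻¹ := by
  classical
  have hex : ∃ j : ℕ, u < 2 ^ (j + 1) * ε := ⟨J, hu⟩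
  refine ⟨Nat.find hex, Nat.find_min' hex hu, Nat.find_spec hex, ?_⟩
  rcases Nat.eq_zero_or_pos (Nat.find hex) with h0 | hpos
  · simpa [h0] using hv
  · have hmin := Nat.find_min hex (Nat.sub_lt hpos one_pos)
    rw [Nat.sub_one_add_one hpos.ne', not_lt] at hmin
    rw [← one_div, lt_div_iff₀ (by positivity)]
    nlinarith [mul_nonneg hu₀ hv₀, mul_le_mul_of_nonneg_left hmin hv₀]

theorem mem_Icc_div_of_abs_mul_sub_le {a x k r : K} (ha : 0 < a) (h : |a * x - k| ≤ r) :
    x ∈ Icc ((k - r) / a) ((k + r) / a) := by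
  rw [mem_Icc, div_le_iff₀ ha, le_div_iff₀ ha]
  constructor <;> linarith [abs_le.1 h]

theorem round_natCast_mul_mem_Icc [FloorRing K] {n : ℕ} {x : K} (hx : x ∈ Icc (0 : K) 1) :
    round (n * x) ∈ Finset.Icc 0 (n : ℤ) := by
  have hlow : ((-1 : ℤ) : K) < round ((n : K) * x) := by
    push_cast
    linarith [sub_half_lt_round ((n : K) * x), mul_nonneg n.cast_nonneg hx.1]
  have hup : (round ((n : K) * x) : K) < ((n + 1 : ℤ) : K) := by
    push_cast
    linarith [round_le_add_half ((n : K) * x), mul_le_of_le_one_right n.cast_nonneg hx.2]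
  rw [Int.cast_lt] at hlow hup
  exact Finset.mem_Icc.2 ⟨by omega, by omega⟩

end OrderedField

theorem ediam_Icc_prod_Icc_le (x y c : ℝ) :
    Metric.ediam (Icc x (x + c) ×ˢ Icc y (y + c)) ≤ ENNReal.ofReal c := by
  refine Metric.ediam_le fun p hp q hq => ?_
  rw [Prod.edist_eq]
  refine max_le ?_ ?_
  · simpa using (Metric.edist_le_ediam_of_mem hp.1 hq.1).trans (Real.ediam_Icc x (x + c)).le
  · simpa using (Metric.edist_le_ediam_of_mem hp.2 hq.2).trans (Real.ediam_Icc y (y + c)).le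

noncomputable def hContent2OuterMeasure (t : ℝ) (ht : 0 < t) : OuterMeasure (ℝ × ℝ) :=
  OuterMeasure.ofFunction (fun U => Metric.ediam U ^ t) (by simp [ht])

section HausdorffContent

variable {t : ℝ}

theorem hContent2_eq_outerMeasure (ht : 0 < t) (A : Set (ℝ × ℝ)) :
    hContent2 t A = hContent2OuterMeasure t ht A :=
  rfl

theorem hContent2_le_ediam_rpow (ht : 0 < t) (A : Set (ℝ × ℝ)) :
    hContent2 t A ≤ Metric.ediam A ^ t :=
  (hContent2_eq_outerMeasure ht A).trans_le (OuterMeasure.ofFunction_le A)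

theorem hContent2_le_sum_of_subset_biUnion {ι : Type*} (ht : 0 < t) {A : Set (ℝ × ℝ)}
    {I : Finset ι} {U : ι → Set (ℝ × ℝ)} (hA : A ⊆ ⋃ i ∈ I, U i) :
    hContent2 t A ≤ ∑ i ∈ I, hContent2 t (U i) := by
  simp only [hContent2_eq_outerMeasure ht]
  exact (measure_mono hA).trans (measure_biUnion_finset_le I U)

theorem hContent2_Icc_prod_Icc_le (ht : 0 < t) {x₀ x₁ y₀ y₁ : ℝ} (hx : x₀ < x₁) (hy : y₀ < y₁) :
    hContent2 t (Icc x₀ x₁ ×ˢ Icc y₀ y₁) ≤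
      ENNReal.ofReal (4 * (x₁ - x₀) * (y₁ - y₀) * min (x₁ - x₀) (y₁ - y₀) ^ (t - 2)) := by
  set w := x₁ - x₀
  set v := y₁ - y₀
  set c := min w v
  have hc : 0 < c := lt_min (sub_pos.2 hx) (sub_pos.2 hy)
  set M := ⌊w / c⌋₊ + 1
  set N := ⌊v / c⌋₊ + 1
  have hcover : Icc x₀ x₁ ×ˢ Icc y₀ y₁ ⊆ ⋃ p ∈ Finset.range M ×ˢ Finset.range N,
      Icc (x₀ + p.1 * c) (x₀ + p.1 * c + c) ×ˢ Icc (y₀ + p.2 * c) (y₀ + p.2 * c + c) := by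
    rintro ⟨x, y⟩ ⟨hxI, hyI⟩
    obtain ⟨m, hm, hxm⟩ := Set.mem_iUnion₂.1 (Icc_subset_biUnion_Icc hc hxI)
    obtain ⟨n, hn, hyn⟩ := Set.mem_iUnion₂.1 (Icc_subset_biUnion_Icc hc hyI)
    exact Set.mem_iUnion₂.2 ⟨(m, n), Finset.mem_product.2 ⟨hm, hn⟩, hxm, hyn⟩
  have hsquare (p : ℕ × ℕ) : hContent2 t
      (Icc (x₀ + p.1 * c) (x₀ + p.1 * c + c) ×ˢ Icc (y₀ + p.2 * c) (y₀ + p.2 * c + c)) ≤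
        ENNReal.ofReal (c ^ t) := by
    rw [← ENNReal.ofReal_rpow_of_pos hc]
    exact (hContent2_le_ediam_rpow ht _).trans
      (ENNReal.rpow_le_rpow (ediam_Icc_prod_Icc_le _ _ c) ht.le)
  have hcount : (M : ℝ) * N * c ^ t ≤ 4 * w * v * c ^ (t - 2) := by
    have hM := Nat.floor_add_one_le_two_mul ((one_le_div hc).2 (min_le_left w v))
    have hN := Nat.floor_add_one_le_two_mul ((one_le_div hc).2 (min_le_right w v))
    calc (M : ℝ) * N * c ^ t ≤ (2 * (w / c)) * (2 * (v / c)) * c ^ t := by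
          push_cast [M, N]; gcongr
      _ = 4 * w * v * c ^ (t - 2) := by
          rw [Real.rpow_sub hc, Real.rpow_two]; field_simp; ring
  calc hContent2 t (Icc x₀ x₁ ×ˢ Icc y₀ y₁)
      ≤ ∑ p ∈ Finset.range M ×ˢ Finset.range N, ENNReal.ofReal (c ^ t) :=
        (hContent2_le_sum_of_subset_biUnion ht hcover).trans
          (Finset.sum_le_sum fun p _ => hsquare p)
    _ = ENNReal.ofReal (M * N * c ^ t) := by
        rw [Finset.sum_const, Finset.card_product, Finset.card_range, Finset.card_range,
          nsmul_eq_mul, ENNReal.ofReal_mul (by positivity), ← Nat.cast_mul,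
          ENNReal.ofReal_natCast]
    _ ≤ _ := ENNReal.ofReal_le_ofReal hcount

end HausdorffContent

def dyadicRect (a b : ℕ) (ε : ℝ) (j : ℕ) (k l : ℤ) : Set (ℝ × ℝ) :=
  Icc (((k : ℝ) - 2 ^ (j + 1) * ε) / a) ((k + 2 ^ (j + 1) * ε) / a) ×ˢ
    Icc (((l : ℝ) - (2 ^ j)⁻¹) / b) ((l + (2 ^ j)⁻¹) / b)

/-- `w⁻¹ ^ (1 - s) + h⁻¹ ^ (1 - s)` for the width `w` and height `h` of `dyadicRect a b ε j k l`. -/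
noncomputable def dyadicWeight (a b : ℕ) (ε s : ℝ) (j : ℕ) : ℝ :=
  ((a : ℝ) / (4 * ε) / 2 ^ j) ^ (1 - s) + ((b : ℝ) / 2 * 2 ^ j) ^ (1 - s)

theorem subset_biUnion_dyadicRect {a b : ℕ} (ha : 0 < a) (hb : 0 < b) {ε : ℝ} {J : ℕ}
    (hJ : 1 / 2 < 2 ^ (J + 1) * ε) :
    {p : ℝ × ℝ | p.1 ∈ Icc (0 : ℝ) 1 ∧ p.2 ∈ Icc (0 : ℝ) 1 ∧
        nint ((a : ℝ) * p.1) * nint ((b : ℝ) * p.2) < ε} ⊆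
      ⋃ i ∈ Finset.range (J + 1) ×ˢ Finset.Icc 0 (a : ℤ) ×ˢ Finset.Icc 0 (b : ℤ),
        dyadicRect a b ε i.1 i.2.1 i.2.2 := by
  rintro ⟨x, y⟩ ⟨hx, hy, hxy⟩
  obtain ⟨j, hjJ, hju, hjv⟩ := exists_dyadic_level (abs_nonneg _) (abs_nonneg _)
    ((abs_sub_round _).trans_lt one_half_lt_one) hxy ((abs_sub_round _).trans_lt hJ)
  refine Set.mem_iUnion₂.2 ⟨(j, round ((a : ℝ) * x), round ((b : ℝ) * y)), ?_, ?_, ?_⟩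
  · simp only [Finset.mem_product, Finset.mem_range]
    exact ⟨Nat.lt_succ_of_le hjJ, round_natCast_mul_mem_Icc hx, round_natCast_mul_mem_Icc hy⟩
  · exact mem_Icc_div_of_abs_mul_sub_le (Nat.cast_pos.2 ha) hju.le
  · exact mem_Icc_div_of_abs_mul_sub_le (Nat.cast_pos.2 hb) hjv.le

theorem min_inv_rpow_le {x y : ℝ} (hx : 0 < x) (hy : 0 < y) (r : ℝ) :
    min x⁻¹ y⁻¹ ^ r ≤ x ^ (-r) + y ^ (-r) := by
  rcases min_cases x⁻¹ y⁻¹ with ⟨h, _⟩ | ⟨h, _⟩ <;>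
    rw [h, Real.inv_rpow (by positivity), ← Real.rpow_neg (by positivity)]
  · linarith [Real.rpow_nonneg hy.le (-r)]
  · linarith [Real.rpow_nonneg hx.le (-r)]

theorem hContent2_dyadicRect_le {s : ℝ} (hs : -1 < s) {a b : ℕ} (ha : 0 < a) (hb : 0 < b)
    {ε : ℝ} (hε : 0 < ε) (j : ℕ) (k l : ℤ) :
    hContent2 (1 + s) (dyadicRect a b ε j k l) ≤
      ENNReal.ofReal (32 * ε / (a * b) * dyadicWeight a b ε s j) := by
  have haR : (0 : ℝ) < a := Nat.cast_pos.2 ha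
  have hbR : (0 : ℝ) < b := Nat.cast_pos.2 hb
  set X : ℝ := a / (4 * ε) / 2 ^ j
  set Y : ℝ := b / 2 * 2 ^ j
  have hX : 0 < X := by positivity
  have hY : 0 < Y := by positivity
  have hwidth : ((k : ℝ) + 2 ^ (j + 1) * ε) / a - (k - 2 ^ (j + 1) * ε) / a = X⁻¹ := by
    simp only [X]; field_simp; ring
  have hheight : ((l : ℝ) + (2 ^ j)⁻¹) / b - (l - (2 ^ j)⁻¹) / b = Y⁻¹ := by
    simp only [Y]; field_simp; ring
  have harea : X⁻¹ * Y⁻¹ = 8 * ε / (a * b) := by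
    simp only [X, Y]; field_simp; ring
  refine (hContent2_Icc_prod_Icc_le (by linarith) (sub_pos.1 (hwidth ▸ inv_pos.2 hX))
    (sub_pos.1 (hheight ▸ inv_pos.2 hY))).trans (ENNReal.ofReal_le_ofReal ?_)
  rw [hwidth, hheight]
  calc 4 * X⁻¹ * Y⁻¹ * min X⁻¹ Y⁻¹ ^ (1 + s - 2)
      ≤ 4 * X⁻¹ * Y⁻¹ * (X ^ (1 - s) + Y ^ (1 - s)) := by
        have hmin := min_inv_rpow_le hX hY (1 + s - 2)
        rw [show -(1 + s - 2) = 1 - s by ring] at hmin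
        gcongr
    _ = 32 * ε / (a * b) * dyadicWeight a b ε s j := by
        rw [mul_assoc 4, harea, dyadicWeight]; ring

theorem hContent2_le_mul_sum_dyadicWeight {s : ℝ} (hs : -1 < s) {a b : ℕ} (ha : 0 < a)
    (hb : 0 < b) {ε : ℝ} (hε : 0 < ε) {J : ℕ} (hJ : 1 / 2 < 2 ^ (J + 1) * ε) :
    hContent2 (1 + s) {p : ℝ × ℝ | p.1 ∈ Icc (0 : ℝ) 1 ∧ p.2 ∈ Icc (0 : ℝ) 1 ∧
        nint ((a : ℝ) * p.1) * nint ((b : ℝ) * p.2) < ε} ≤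
      ENNReal.ofReal (128 * ε * ∑ j ∈ Finset.range (J + 1), dyadicWeight a b ε s j) := by
  have haR : (0 : ℝ) < a := Nat.cast_pos.2 ha
  have hbR : (0 : ℝ) < b := Nat.cast_pos.2 hb
  have hweight (j : ℕ) : 0 ≤ dyadicWeight a b ε s j := by unfold dyadicWeight; positivity
  have hcount : ((a : ℝ) + 1) * (b + 1) * (32 * ε / (a * b)) ≤ 128 * ε := by
    rw [mul_div_assoc', div_le_iff₀ (by positivity)]
    have : ((a : ℝ) + 1) * (b + 1) ≤ 4 * (a * b) := by
      nlinarith [(Nat.one_le_cast (α := ℝ)).2 ha, (Nat.one_le_cast (α := ℝ)).2 hb]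
    nlinarith
  calc _ ≤ ∑ i ∈ Finset.range (J + 1) ×ˢ Finset.Icc 0 (a : ℤ) ×ˢ Finset.Icc 0 (b : ℤ),
        hContent2 (1 + s) (dyadicRect a b ε i.1 i.2.1 i.2.2) :=
        hContent2_le_sum_of_subset_biUnion (by linarith) (subset_biUnion_dyadicRect ha hb hJ)
    _ ≤ ∑ i ∈ Finset.range (J + 1) ×ˢ Finset.Icc 0 (a : ℤ) ×ˢ Finset.Icc 0 (b : ℤ),
        ENNReal.ofReal (32 * ε / (a * b) * dyadicWeight a b ε s i.1) :=
        Finset.sum_le_sum fun i _ => hContent2_dyadicRect_le hs ha hb hε _ _ _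
    _ = ENNReal.ofReal (((a : ℝ) + 1) * (b + 1) * (32 * ε / (a * b)) *
          ∑ j ∈ Finset.range (J + 1), dyadicWeight a b ε s j) := by
        rw [← ENNReal.ofReal_sum_of_nonneg fun i _ => mul_nonneg (by positivity) (hweight i.1),
          Finset.sum_product,
          Finset.mul_sum]
        congr 1
        refine Finset.sum_congr rfl fun j _ => ?_
        simp only [Finset.sum_const, Finset.card_product, Int.card_Icc, sub_zero,
          Int.toNat_natCast_add_one, nsmul_eq_mul]
        push_cast
        ring
    _ ≤ _ := ENNReal.ofReal_le_ofReal
        (mul_le_mul_of_nonneg_right hcount (Finset.sum_nonneg fun j _ => hweight j))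

theorem sum_range_rpow_div_two_pow_le {θ x : ℝ} (hθ : 0 < θ) (hx : 0 ≤ x) (n : ℕ) :
    ∑ j ∈ Finset.range n, (x / 2 ^ j) ^ θ ≤ x ^ θ / (1 - (2 ^ θ)⁻¹) := by
  have hq : (2 ^ θ : ℝ)⁻¹ < 1 := inv_lt_one_of_one_lt₀ (Real.one_lt_rpow one_lt_two hθ)
  have hterm (j : ℕ) : (x / 2 ^ j) ^ θ = x ^ θ * ((2 ^ θ)⁻¹) ^ j := by
    rw [Real.div_rpow hx (by positivity), ← Real.rpow_pow_comm zero_le_two, inv_pow,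
      div_eq_mul_inv]
  calc ∑ j ∈ Finset.range n, (x / 2 ^ j) ^ θ
      = x ^ θ * ∑ j ∈ Finset.Ico 0 n, ((2 ^ θ)⁻¹) ^ j := by
        simp only [hterm, ← Finset.mul_sum, Finset.range_eq_Ico]
    _ ≤ x ^ θ * (((2 ^ θ)⁻¹) ^ 0 / (1 - (2 ^ θ)⁻¹)) := by
        gcongr
        exact geom_sum_Ico_le_of_lt_one (by positivity) hq
    _ = x ^ θ / (1 - (2 ^ θ)⁻¹) := by rw [pow_zero, mul_one_div]

theorem sum_range_succ_rpow_mul_two_pow_le {θ x : ℝ} (hθ : 0 < θ) (hx : 0 ≤ x) (n : ℕ) :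
    ∑ j ∈ Finset.range (n + 1), (x * 2 ^ j) ^ θ ≤ (x * 2 ^ n) ^ θ / (1 - (2 ^ θ)⁻¹) := by
  rw [← Finset.sum_range_reflect]
  refine le_of_eq_of_le (Finset.sum_congr rfl fun j hj => ?_)
    (sum_range_rpow_div_two_pow_le hθ (by positivity) (n + 1))
  rw [Nat.add_sub_cancel, pow_sub₀ _ two_ne_zero (Nat.le_of_lt_succ (Finset.mem_range.1 hj)),
    mul_div_assoc, div_eq_mul_inv]

theorem mul_div_rpow_one_sub {x y : ℝ} (hx : 0 < x) (hy : 0 < y) (s : ℝ) :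
    y * (x / y) ^ (1 - s) = x * (y / x) ^ s := by
  rw [Real.rpow_sub (by positivity), Real.rpow_one, Real.div_rpow hx.le hy.le,
    Real.div_rpow hy.le hx.le]
  field_simp

theorem mul_sum_dyadicWeight_le {s : ℝ} (hs : s < 1) {a b : ℕ} (ha : 0 < a) (hb : 0 < b)
    {ε : ℝ} (hε : 0 < ε) {J : ℕ} (hJ : 2 ^ J * ε ≤ 1) :
    ε * ∑ j ∈ Finset.range (J + 1), dyadicWeight a b ε s j ≤
      (a * (ε / a) ^ s + b * (ε / b) ^ s) / (1 - (2 ^ (1 - s))⁻¹) := by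
  have haR : (0 : ℝ) < a := Nat.cast_pos.2 ha
  have hbR : (0 : ℝ) < b := Nat.cast_pos.2 hb
  have hθ : 0 < 1 - s := sub_pos.2 hs
  have hD : 0 < 1 - (2 ^ (1 - s) : ℝ)⁻¹ :=
    sub_pos.2 (inv_lt_one_of_one_lt₀ (Real.one_lt_rpow one_lt_two hθ))
  have hsum_a : ε * ∑ j ∈ Finset.range (J + 1), ((a : ℝ) / (4 * ε) / 2 ^ j) ^ (1 - s) ≤
      a * (ε / a) ^ s / (1 - (2 ^ (1 - s))⁻¹) :=
    calc _ ≤ ε * ((a / (4 * ε)) ^ (1 - s) / (1 - (2 ^ (1 - s))⁻¹)) := by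
          gcongr; exact sum_range_rpow_div_two_pow_le hθ (by positivity) _
      _ ≤ ε * ((a / ε) ^ (1 - s) / (1 - (2 ^ (1 - s))⁻¹)) := by
          gcongr; linarith
      _ = _ := by rw [← mul_div_assoc, mul_div_rpow_one_sub haR hε]
  have hsum_b : ε * ∑ j ∈ Finset.range (J + 1), ((b : ℝ) / 2 * 2 ^ j) ^ (1 - s) ≤
      b * (ε / b) ^ s / (1 - (2 ^ (1 - s))⁻¹) :=
    calc _ ≤ ε * (((b : ℝ) / 2 * 2 ^ J) ^ (1 - s) / (1 - (2 ^ (1 - s))⁻¹)) := by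
          gcongr; exact sum_range_succ_rpow_mul_two_pow_le hθ (by positivity) _
      _ ≤ ε * ((b / ε) ^ (1 - s) / (1 - (2 ^ (1 - s))⁻¹)) := by
          gcongr
          rw [le_div_iff₀ hε]
          nlinarith
      _ = _ := by rw [← mul_div_assoc, mul_div_rpow_one_sub hbR hε]
  simp only [dyadicWeight, Finset.sum_add_distrib, mul_add, add_div]
  exact add_le_add hsum_a hsum_b

theorem stmt6 (s : ℝ) (hs : s ∈ Ioo (0 : ℝ) 1) :
    ∃ C₁ : ℝ, 0 < C₁ ∧ ∀ (a b : ℕ), 0 < a → 0 < b → ∀ δ : ℝ, δ ∈ Ioo (0 : ℝ) 1 →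
      hContent2 (1 + s) {p : ℝ × ℝ | p.1 ∈ Icc (0 : ℝ) 1 ∧ p.2 ∈ Icc (0 : ℝ) 1 ∧
          nint ((a : ℝ) * p.1) * nint ((b : ℝ) * p.2) < δ ^ 2} ≤
        ENNReal.ofReal (C₁ * ((a : ℝ) * (δ ^ 2 / a) ^ s + (b : ℝ) * (δ ^ 2 / b) ^ s)) := by
  obtain ⟨hs₀, hs₁⟩ := hs
  have hD : 0 < 1 - (2 ^ (1 - s) : ℝ)⁻¹ :=
    sub_pos.2 (inv_lt_one_of_one_lt₀ (Real.one_lt_rpow one_lt_two (sub_pos.2 hs₁)))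
  refine ⟨128 / (1 - (2 ^ (1 - s))⁻¹), div_pos (by norm_num) hD,
    fun a b ha hb δ ⟨hδ₀, hδ₁⟩ => ?_⟩
  have hε : 0 < δ ^ 2 := by positivity
  obtain ⟨J, hJ₁, hJ₂⟩ := exists_nat_pow_near
    (one_le_inv₀ hε |>.2 (pow_le_one₀ hδ₀.le hδ₁.le)) one_lt_two
  rw [← one_div, le_div_iff₀ hε] at hJ₁
  rw [inv_lt_iff_one_lt_mul₀ hε] at hJ₂
  refine (hContent2_le_mul_sum_dyadicWeight (J := J) (by linarith) ha hb hε
    (by linarith [hJ₂])).trans (ENNReal.ofReal_le_ofReal ?_)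
  rw [mul_assoc, div_mul_eq_mul_div, mul_div_assoc]
  exact mul_le_mul_of_nonneg_left (mul_sum_dyadicWeight_le hs₁ ha hb hε hJ₁) (by norm_num)
end

section
/- Let a, b be positive integers and ρ, η ∈ (0,1). Then the set F_{a,b}(ρ,η) = { x ∈ [0,1] : ‖ax‖ < ρ and ‖bx‖ < η } can be covered by at most 12·[ gcd(a,b) + 2ab·max{ρ/a, η/b} ] intervals each of length 2·min{ρ/a, η/b}. -/
/-!
By symmetry assume `ρ / a ≤ η / b`. Every `x` of the set lies within `ρ / a` of `k / a`, where
`k = round (a x) ∈ [0, a]`, and for this `k` the triangle inequality gives `‖b k / a‖ < 2η`.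
Write `a = p g`, `b = q g` with `g = gcd(a, b)` and `p, q` coprime, so that `b k / a = q k / p`.
The residue of `q k` modulo `p` nearest to `0` is then smaller than `2ηp` in absolute value, and
together with the block index `k / p ∈ [0, g]` it determines `k`. Hence at most
`(4ηp + 1)(g + 1) ≤ 8ηa + 2g` intervals `[(k - ρ) / a, (k + ρ) / a]` are needed.
-/

open MeasureTheory Filter Set

open scoped Finset

lemma nint_le_nint_add_abs_sub (s t : ℝ) : nint s ≤ nint t + |s - t| :=
  calc nint s ≤ |s - round t| := round_le s (round t)
    _ ≤ |s - t| + nint t := abs_sub_le s t _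
    _ = nint t + |s - t| := add_comm _ _

lemma round_mem_Icc {y : ℝ} {n : ℤ} (hy : y ∈ Icc 0 (n : ℝ)) : round y ∈ Finset.Icc 0 n := by
  have hlo : (-1 : ℝ) < round y := by linarith [sub_half_lt_round y, hy.1]
  have hhi : (round y : ℝ) < n + 1 := by linarith [round_le_add_half y, hy.2]
  rw [Finset.mem_Icc]
  constructor
  · have : (-1 : ℤ) < round y := by exact_mod_cast hlo
    omega
  · have : round y < n + 1 := by exact_mod_cast hhi
    omega

lemma Int.eq_of_modEq_of_ediv_eq {n a b : ℤ} (h : a ≡ b [ZMOD n]) (h' : a / n = b / n) :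
    a = b := by
  rw [← Int.mul_ediv_add_emod a n, ← Int.mul_ediv_add_emod b n, h', h.eq]

noncomputable def balancedMod (n : ℤ) (p : ℕ) : ℤ := n - p * round ((n : ℝ) / p)

lemma balancedMod_modEq (n : ℤ) (p : ℕ) : balancedMod n p ≡ n [ZMOD p] :=
  Int.modEq_iff_dvd.2 ⟨round ((n : ℝ) / p), by rw [balancedMod]; ring⟩

lemma abs_balancedMod {p : ℕ} (hp : 0 < p) (n : ℤ) :
    |(balancedMod n p : ℝ)| = p * nint (n / p) := by
  have hp' : (0 : ℝ) < p := by exact_mod_cast hp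
  have h : (balancedMod n p : ℝ) = p * (n / p - round ((n : ℝ) / p)) := by
    rw [balancedMod]; push_cast; field_simp
  rw [h, abs_mul, abs_of_pos hp', nint]

theorem card_filter_nint_lt_le_of_coprime {p q : ℕ} (hp : 0 < p) (hpq : p.Coprime q) (m : ℕ)
    (θ : ℝ) :
    #{k ∈ Finset.Icc (0 : ℤ) (p * m) | nint (q * ((k : ℤ) : ℝ) / p) < θ} ≤
      (2 * ⌊θ * p⌋₊ + 1) * (m + 1) := by
  set N := ⌊θ * p⌋₊
  calc #{k ∈ Finset.Icc (0 : ℤ) (p * m) | nint (q * ((k : ℤ) : ℝ) / p) < θ}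
      ≤ #(Finset.Icc (-N : ℤ) N ×ˢ Finset.Icc (0 : ℤ) m) :=
        Finset.card_le_card_of_injOn (fun k => (balancedMod (q * k) p, k / p)) ?mapsTo ?injOn
    _ = (2 * N + 1) * (m + 1) := by
        rw [Finset.card_product, Int.card_Icc, Int.card_Icc]; congr 1; omega
  case mapsTo =>
    intro k hk
    rw [Finset.mem_coe, Finset.mem_filter, Finset.mem_Icc] at hk
    simp only [Finset.coe_product, mem_prod, Finset.coe_Icc, mem_Icc]
    have hp' : (0 : ℝ) < p := by exact_mod_cast hp
    have hlt : ((balancedMod (q * k) p).natAbs : ℝ) < θ * p := by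
      rw [Nat.cast_natAbs, Int.cast_abs, abs_balancedMod hp, mul_comm θ]
      push_cast
      exact mul_lt_mul_of_pos_left hk.2 hp'
    have hle : (balancedMod (q * k) p).natAbs ≤ N := Nat.le_floor hlt.le
    exact ⟨by omega, Int.ediv_nonneg hk.1.1 (by omega),
      Int.ediv_le_of_le_mul (by omega) (by linarith [hk.1.2])⟩
  case injOn =>
    intro k₁ _ k₂ _ h
    obtain ⟨hmod, hdiv⟩ := Prod.mk.inj h
    have hq : q * k₁ ≡ q * k₂ [ZMOD p] :=
      (balancedMod_modEq _ _).symm.trans (hmod ▸ balancedMod_modEq _ _)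
    refine Int.eq_of_modEq_of_ediv_eq ?_ hdiv
    simpa [Int.gcd_natCast_natCast, hpq] using Int.ModEq.cancel_left_div_gcd (by omega) hq

theorem card_filter_nint_lt_le {a b : ℕ} (ha : 0 < a) {θ : ℝ} (hθ : 0 ≤ θ) :
    (#{k ∈ Finset.Icc (0 : ℤ) a | nint (b * ((k : ℤ) : ℝ) / a) < θ} : ℝ) ≤
      4 * θ * a + 2 * Nat.gcd a b := by
  obtain ⟨p, q, hpq, hap, hbq⟩ := Nat.exists_coprime a b
  generalize Nat.gcd a b = g at hap hbq ⊢
  subst hap hbq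
  have hp : 0 < p := Nat.pos_of_mul_pos_right ha
  have hg : 0 < g := Nat.pos_of_mul_pos_left ha
  have hratio (k : ℤ) : ((q * g : ℕ) : ℝ) * k / (p * g : ℕ) = q * k / p := by
    push_cast; field_simp
  simp only [hratio]
  have hθp : 0 ≤ θ * p := by positivity
  have hg1 : (1 : ℝ) ≤ g := by exact_mod_cast hg
  calc (#{k ∈ Finset.Icc (0 : ℤ) (p * g : ℕ) | nint (q * ((k : ℤ) : ℝ) / p) < θ} : ℝ)
      ≤ (2 * ⌊θ * p⌋₊ + 1) * (g + 1) := by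
        exact_mod_cast card_filter_nint_lt_le_of_coprime hp hpq g θ
    _ ≤ (2 * (θ * p) + 1) * (g + 1) := by gcongr; exact Nat.floor_le hθp
    _ ≤ 4 * θ * (p * g : ℕ) + 2 * g := by
        push_cast; nlinarith [mul_le_mul_of_nonneg_left hg1 hθp]

lemma exists_fin_cover_of_finset {ι : Type*} (s : Finset ι) (f : ι → ℝ) (L : ℝ) {A : Set ℝ}
    (h : A ⊆ ⋃ i ∈ s, Icc (f i) (f i + L)) :
    ∃ c : Fin #s → ℝ, A ⊆ ⋃ j, Icc (c j) (c j + L) := by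
  refine ⟨fun j => f (s.equivFin.symm j), fun x hx => ?_⟩
  obtain ⟨i, hi, hxi⟩ := mem_iUnion₂.1 (h hx)
  exact mem_iUnion.2 ⟨s.equivFin ⟨i, hi⟩, by simpa using hxi⟩

lemma exists_cover_of_div_le {a b : ℕ} (ha : 0 < a) (hb : 0 < b) {ρ η : ℝ} (hη : 0 ≤ η)
    (hle : ρ / a ≤ η / b) :
    ∃ (k : ℕ) (c : Fin k → ℝ), (k : ℝ) ≤ 8 * η * a + 2 * Nat.gcd a b ∧
      {x : ℝ | x ∈ Icc 0 1 ∧ nint (a * x) < ρ ∧ nint (b * x) < η} ⊆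
        ⋃ i, Icc (c i) (c i + 2 * (ρ / a)) := by
  have ha' : (0 : ℝ) < a := by exact_mod_cast ha
  have hb' : (0 : ℝ) < b := by exact_mod_cast hb
  set S := {k ∈ Finset.Icc (0 : ℤ) a | nint (b * ((k : ℤ) : ℝ) / a) < 2 * η}
  suffices hcover : {x : ℝ | x ∈ Icc 0 1 ∧ nint (a * x) < ρ ∧ nint (b * x) < η} ⊆
      ⋃ k ∈ S, Icc ((k - ρ) / a) ((k - ρ) / a + 2 * (ρ / a)) by
    obtain ⟨c, hc⟩ := exists_fin_cover_of_finset S (fun k => (k - ρ) / a) _ hcover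
    exact ⟨_, c, by linarith [card_filter_nint_lt_le (b := b) ha (by positivity : 0 ≤ 2 * η)], hc⟩
  rintro x ⟨hx, hax, hbx⟩
  set k := round (a * x)
  have hk : |a * x - k| < ρ := hax
  have hbk : nint (b * k / a) < 2 * η :=
    calc nint (b * k / a) ≤ nint (b * x) + |b * k / a - b * x| := nint_le_nint_add_abs_sub _ _
      _ = nint (b * x) + b / a * |a * x - k| := by
        rw [abs_sub_comm, show b * x - b * k / a = b / a * (a * x - k) by field_simp, abs_mul,
          abs_of_pos (div_pos hb' ha')]
      _ < η + η := by
        gcongr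
        calc b / a * |a * x - k| < b / a * ρ := by gcongr
          _ = b * (ρ / a) := by ring
          _ ≤ b * (η / b) := by gcongr
          _ = η := by field_simp
      _ = 2 * η := by ring
  have hkS : k ∈ S := by
    refine Finset.mem_filter.2 ⟨round_mem_Icc ?_, hbk⟩
    push_cast
    exact ⟨by nlinarith [hx.1], by nlinarith [hx.2]⟩
  refine mem_iUnion₂.2 ⟨k, hkS, ?_⟩
  obtain ⟨hlo, hhi⟩ := abs_lt.1 hk
  constructor
  · rw [div_le_iff₀ ha']; linarith
  · rw [show (k - ρ) / a + 2 * (ρ / a) = (k + ρ) / a by ring, le_div_iff₀ ha']; linarith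

theorem stmt7 (a b : ℕ) (ha : 0 < a) (hb : 0 < b)
    (ρ η : ℝ) (hρ : ρ ∈ Ioo (0 : ℝ) 1) (hη : η ∈ Ioo (0 : ℝ) 1) :
    ∃ (k : ℕ) (c : Fin k → ℝ),
      (k : ℝ) ≤ 12 * ((Nat.gcd a b : ℝ) + 2 * (a : ℝ) * (b : ℝ) * max (ρ / a) (η / b)) ∧
      {x : ℝ | x ∈ Icc (0 : ℝ) 1 ∧ nint ((a : ℝ) * x) < ρ ∧ nint ((b : ℝ) * x) < η} ⊆
        ⋃ i, Icc (c i) (c i + 2 * min (ρ / a) (η / b)) := by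
  rcases le_total (ρ / a) (η / b) with h | h
  · obtain ⟨k, c, hk, hc⟩ := exists_cover_of_div_le ha hb hη.1.le h
    refine ⟨k, c, hk.trans ?_, by rwa [min_eq_left h]⟩
    rw [max_eq_right h, show 2 * (a : ℝ) * b * (η / b) = 2 * a * η by field_simp]
    linarith [hη.1, (Nat.cast_nonneg _ : (0 : ℝ) ≤ Nat.gcd a b)]
  · obtain ⟨k, c, hk, hc⟩ := exists_cover_of_div_le hb ha hρ.1.le h
    refine ⟨k, c, hk.trans ?_, fun x hx => ?_⟩
    · rw [max_eq_left h, Nat.gcd_comm a b, show 2 * (a : ℝ) * b * (ρ / a) = 2 * b * ρ by field_simp]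
      linarith [hρ.1, (Nat.cast_nonneg _ : (0 : ℝ) ≤ Nat.gcd b a)]
    · rw [min_eq_right h]
      exact hc ⟨hx.1, hx.2.2, hx.2.1⟩
end

section
/- Let A = {a_n}, B = {b_n} be two sequences of positive integers with a_n ≤ b_n for all n, ψ: ℕ → (0,1) a positive function, and s ∈ (0,1]. Define S_{A,B}(ψ) = { x ∈ [0,1] : max{‖a_n x‖, ‖b_n x‖} < ψ(n) for infinitely many n ∈ ℕ }. If Σ_{n=1}^∞ (gcd(a_n,b_n) + b_n ψ(n)) · (ψ(n)/b_n)^s < ∞, then the s-dimensional Hausdorff measure of S_{A,B}(ψ) is zero. -/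
open MeasureTheory Filter Set

open scoped ENNReal Topology Finset

/-!
If `‖a x‖ < ψ` and `‖b x‖ < ψ` with `a ≤ b`, then `x` lies within `ψ / b` of some `q / b`
with `0 ≤ q ≤ b` and `‖a q / b‖ < 2ψ`. Writing `a = d a'`, `b = d b'` with `d = gcd a b`,
the map `q ↦ a' q mod b'` is a bijection on every block of `b'` consecutive integers, so
there are at most `4 (d + 2 ψ b)` such `q`. The `n`-th set of the limsup is therefore covered
by intervals of total `s`-dimensional cost `O((gcd (aₙ, bₙ) + bₙ ψₙ) (ψₙ / bₙ) ^ s)`, and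
the Hausdorff–Cantelli lemma applies.
-/

theorem hausdorffMeasure_limsup_eq_zero_s14 {X ι : Type*} [EMetricSpace X] [MeasurableSpace X]
    [BorelSpace X] {s : ℝ} (hs : 0 < s) {E : ℕ → Set X} (K : ℕ → Finset ι)
    (U : ℕ → ι → Set X) (hE : ∀ n, E n ⊆ ⋃ i ∈ K n, U n i)
    (hU : ∑' n, ∑ i ∈ K n, Metric.ediam (U n i) ^ s ≠ ∞) :
    μH[s] (limsup E atTop) = 0 := by
  set c : ℕ → ℝ≥0∞ := fun n => ∑ i ∈ K n, Metric.ediam (U n i) ^ s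
  set tail : ℕ → ℝ≥0∞ := fun N => ∑' k, c (k + N)
  have htail : Tendsto tail atTop (𝓝 0) := ENNReal.tendsto_sum_nat_add c hU
  have hr : Tendsto (fun N => tail N ^ s⁻¹) atTop (𝓝 0) := by
    simpa [Function.comp_def, ENNReal.zero_rpow_of_pos (inv_pos.2 hs)] using
      ((ENNReal.continuous_rpow_const (y := s⁻¹)).tendsto 0).comp htail
  let t : (N : ℕ) → (Σ k : ℕ, K (k + N)) → Set X := fun N i => U (i.1 + N) i.2
  have hdiam : ∀ N i, Metric.ediam (t N i) ≤ tail N ^ s⁻¹ := by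
    rintro N ⟨k, i, hi⟩
    rw [ENNReal.le_rpow_inv_iff hs]
    exact (Finset.single_le_sum (f := fun i => Metric.ediam (U (k + N) i) ^ s)
      (fun _ _ => zero_le) hi).trans (ENNReal.le_tsum (f := fun k => c (k + N)) k)
  have hcover : ∀ N, limsup E atTop ⊆ ⋃ i, t N i := by
    intro N x hx
    rw [limsup_eq_iInf_iSup_of_nat'] at hx
    obtain ⟨k, hk⟩ := mem_iUnion.1 (mem_iInter.1 hx N)
    obtain ⟨i, hi, hxi⟩ := mem_iUnion₂.1 (hE (k + N) hk)
    exact mem_iUnion.2 ⟨⟨k, i, hi⟩, hxi⟩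
  have hsum : ∀ N, ∑' i, Metric.ediam (t N i) ^ s = tail N := fun N => by
    rw [ENNReal.tsum_sigma']
    exact tsum_congr fun k =>
      Finset.tsum_subtype (K (k + N)) (fun i => Metric.ediam (U (k + N) i) ^ s)
  refine le_antisymm ?_ zero_le
  calc μH[s] (limsup E atTop)
      ≤ liminf (fun N => ∑' i, Metric.ediam (t N i) ^ s) atTop :=
        Measure.hausdorffMeasure_le_liminf_tsum s _ _ hr t (.of_forall hdiam) (.of_forall hcover)
    _ = 0 := by simpa only [hsum] using htail.liminf_eq

theorem nint_add_le (x y : ℝ) : nint (x + y) ≤ nint x + |y| :=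
  calc nint (x + y) ≤ |x + y - round x| := round_le _ _
    _ = |(x - round x) + y| := by ring_nf
    _ ≤ nint x + |y| := abs_add_le _ _

theorem nint_mul_div_lt {a b q x ψ : ℝ} (ha : 0 ≤ a) (hab : a ≤ b) (hb : 0 < b)
    (hq : |b * x - q| < ψ) (hax : nint (a * x) < ψ) : nint (a * q / b) < 2 * ψ := by
  have hsplit : a * q / b = a * x + a / b * (q - b * x) := by field_simp; ring
  have hsmall : |a / b * (q - b * x)| < ψ := by
    rw [abs_mul, abs_of_nonneg (div_nonneg ha hb.le), abs_sub_comm]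
    exact (mul_le_of_le_one_left (abs_nonneg _) (div_le_one_of_le₀ hab hb.le)).trans_lt hq
  linarith [hsplit ▸ nint_add_le (a * x) (a / b * (q - b * x))]

noncomputable def smallNintNumerators (a b : ℕ) (δ : ℝ) (Q : ℕ) : Finset ℕ :=
  {q ∈ Finset.range Q | nint (a * (q : ℝ) / b) < δ}

theorem Int.card_Icc_neg_floor_floor_le {R : ℝ} (hR : 0 ≤ R) :
    (#(Finset.Icc (-⌊R⌋) ⌊R⌋) : ℝ) ≤ 2 * R + 1 := by
  have hfloor : (0 : ℤ) ≤ ⌊R⌋ := Int.floor_nonneg.2 hR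
  rw [Int.card_Icc, show ⌊R⌋ + 1 - -⌊R⌋ = 2 * ⌊R⌋ + 1 by ring, ← Int.cast_natCast,
    Int.toNat_of_nonneg (by omega)]
  push_cast
  linarith [Int.floor_le R]

theorem card_smallNintNumerators_le_of_coprime {a b : ℕ} (hb : 0 < b) (hab : a.Coprime b)
    (N : ℕ) {δ : ℝ} (hδ : 0 ≤ δ) :
    (#(smallNintNumerators a b δ (N * b)) : ℝ) ≤ N * (2 * δ * b + 1) := by
  have hbR : (0 : ℝ) < b := Nat.cast_pos.2 hb
  set R := δ * b
  let j : ℕ → ℤ := fun q => a * q - b * round ((a * q / b : ℝ))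
  have hj : ∀ q : ℕ, (j q : ℝ) = b * ((a * q / b : ℝ) - round ((a * q / b : ℝ))) := by
    intro q; simp only [j]; push_cast; field_simp
  have hmaps : ∀ q ∈ smallNintNumerators a b δ (N * b),
      (q / b, j q) ∈ Finset.range N ×ˢ Finset.Icc (-⌊R⌋) ⌊R⌋ := by
    intro q hq
    obtain ⟨hqN, hqδ⟩ := Finset.mem_filter.1 hq
    have hjR : |(j q : ℝ)| ≤ R := by
      rw [hj, abs_mul, abs_of_pos hbR, mul_comm]
      exact mul_le_mul_of_nonneg_right hqδ.le hbR.le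
    have hjR' := abs_le.1 (Int.le_floor.2 (by exact_mod_cast hjR))
    refine Finset.mem_product.2 ⟨Finset.mem_range.2 ?_, Finset.mem_Icc.2 ⟨by omega, hjR'.2⟩⟩
    exact (Nat.div_lt_iff_lt_mul hb).2 (Finset.mem_range.1 hqN)
  -- the block index `q / b` and the signed residue `j q` of `a q` determine `q`, as `a` is a unit
  -- modulo `b`
  have hinj : InjOn (fun q => (q / b, j q)) (smallNintNumerators a b δ (N * b) : Set ℕ) := by
    intro q₁ _ q₂ _ h
    obtain ⟨hdiv, hjeq⟩ := Prod.ext_iff.1 h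
    have hdvd : (b : ℤ) ∣ a * ((q₂ : ℤ) - q₁) :=
      ⟨round ((a * q₂ / b : ℝ)) - round ((a * q₁ / b : ℝ)), by
        simp only [j] at hjeq; linear_combination -hjeq⟩
    have hcop : IsCoprime (b : ℤ) a :=
      Int.isCoprime_iff_gcd_eq_one.2 (by simpa using hab.symm)
    have hmod : q₁ % b = q₂ % b := Nat.modEq_iff_dvd.2 (hcop.dvd_of_dvd_mul_left hdvd)
    rw [← Nat.div_add_mod q₁ b, ← Nat.div_add_mod q₂ b, hmod, show q₁ / b = q₂ / b from hdiv]
  calc (#(smallNintNumerators a b δ (N * b)) : ℝ)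
      ≤ #(Finset.range N ×ˢ Finset.Icc (-⌊R⌋) ⌊R⌋) := by
        exact_mod_cast Finset.card_le_card_of_injOn _ hmaps hinj
    _ = N * #(Finset.Icc (-⌊R⌋) ⌊R⌋) := by
        rw [Finset.card_product, Finset.card_range, Nat.cast_mul]
    _ ≤ N * (2 * δ * b + 1) := by
        rw [mul_assoc 2]
        gcongr
        exact Int.card_Icc_neg_floor_floor_le (by positivity)

theorem card_smallNintNumerators_le {a b : ℕ} (hb : 0 < b) {δ : ℝ} (hδ : 0 ≤ δ) :
    (#(smallNintNumerators a b δ (b + 1)) : ℝ) ≤ 4 * (a.gcd b + δ * b) := by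
  obtain ⟨a', b', hcop, ha', hb'⟩ := Nat.exists_coprime a b
  have hd : 0 < a.gcd b := Nat.gcd_pos_of_pos_right a hb
  generalize a.gcd b = d at ha' hb' hd ⊢
  subst ha' hb'
  have hb'0 : 0 < b' := Nat.pos_of_mul_pos_right hb
  have hsub : smallNintNumerators (a' * d) (b' * d) δ (b' * d + 1)
      ⊆ smallNintNumerators a' b' δ ((d + 1) * b') := by
    intro q hq
    obtain ⟨hqb, hqδ⟩ := Finset.mem_filter.1 hq
    refine Finset.mem_filter.2 ⟨Finset.mem_range.2 ?_, ?_⟩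
    · have := Finset.mem_range.1 hqb; nlinarith
    · have hdR : (d : ℝ) ≠ 0 := by positivity
      have hcancel : ((a' * d : ℕ) : ℝ) * q / (b' * d : ℕ) = a' * q / b' := by
        push_cast; field_simp
      rwa [← hcancel]
  have hdR : (1 : ℝ) ≤ d := by exact_mod_cast hd
  have hb'R : (1 : ℝ) ≤ b' := by exact_mod_cast hb'0
  calc (#(smallNintNumerators (a' * d) (b' * d) δ (b' * d + 1)) : ℝ)
      ≤ #(smallNintNumerators a' b' δ ((d + 1) * b')) := by
        exact_mod_cast Finset.card_le_card hsub
    _ ≤ ((d + 1 : ℕ) : ℝ) * (2 * δ * b' + 1) :=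
        card_smallNintNumerators_le_of_coprime hb'0 hcop _ hδ
    _ ≤ 4 * (d + δ * (b' * d : ℕ)) := by
        push_cast
        nlinarith [mul_nonneg (mul_nonneg hδ (by linarith : (0 : ℝ) ≤ b'))
          (by linarith : (0 : ℝ) ≤ d - 1)]

theorem subset_iUnion_Icc_smallNintNumerators {a b : ℕ} (hb : 0 < b) (hab : a ≤ b) (ψ : ℝ) :
    {x | x ∈ Icc (0 : ℝ) 1 ∧ max (nint (a * x)) (nint (b * x)) < ψ}
      ⊆ ⋃ q ∈ smallNintNumerators a b (2 * ψ) (b + 1), Icc ((q - ψ) / b) ((q + ψ) / b) := by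
  rintro x ⟨⟨hx0, hx1⟩, hψ⟩
  have hbR : (0 : ℝ) < b := Nat.cast_pos.2 hb
  have hlo : (-1 : ℝ) < round (b * x) := by
    linarith [sub_half_lt_round ((b : ℝ) * x), mul_nonneg hbR.le hx0]
  have hhi : (round (b * x) : ℝ) < b + 1 := by
    linarith [round_le_add_half ((b : ℝ) * x), mul_le_of_le_one_right hbR.le hx1]
  have hlo' : -1 < round ((b : ℝ) * x) := by exact_mod_cast hlo
  have hhi' : round ((b : ℝ) * x) < b + 1 := by exact_mod_cast hhi
  set q := (round ((b : ℝ) * x)).toNat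
  have hq : ((q : ℤ) : ℝ) = round ((b : ℝ) * x) := by rw [Int.toNat_of_nonneg (by omega)]
  rw [Int.cast_natCast] at hq
  have hbx : |b * x - q| < ψ := hq ▸ (le_max_right _ _).trans_lt hψ
  refine mem_iUnion₂.2 ⟨q, Finset.mem_filter.2 ⟨Finset.mem_range.2 (by omega), ?_⟩, ?_⟩
  · exact nint_mul_div_lt (Nat.cast_nonneg a) (Nat.cast_le.2 hab) hbR hbx
      ((le_max_left _ _).trans_lt hψ)
  · obtain ⟨h1, h2⟩ := abs_lt.1 hbx
    rw [mem_Icc, div_le_iff₀ hbR, le_div_iff₀ hbR]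
    constructor <;> linarith

theorem sum_ediam_Icc_rpow_le {a b : ℕ} (hb : 0 < b) {ψ s : ℝ} (hψ : 0 ≤ ψ) (hs0 : 0 ≤ s)
    (hs1 : s ≤ 1) :
    ∑ q ∈ smallNintNumerators a b (2 * ψ) (b + 1),
        Metric.ediam (Icc ((q - ψ) / b) ((q + ψ) / b)) ^ s
      ≤ ENNReal.ofReal (16 * ((a.gcd b + b * ψ) * (ψ / b) ^ s)) := by
  have hbR : (0 : ℝ) < b := Nat.cast_pos.2 hb
  have hψb : 0 ≤ ψ / b := div_nonneg hψ hbR.le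
  have hdiam : ∀ q : ℕ, Metric.ediam (Icc ((q - ψ) / b) ((q + ψ) / b)) ^ s
      = ENNReal.ofReal ((2 * ψ / b) ^ s) := by
    intro q
    rw [Real.ediam_Icc, show (q + ψ) / b - (q - ψ) / b = 2 * ψ / b by ring,
      ENNReal.ofReal_rpow_of_nonneg (by positivity) hs0]
  have hcard := card_smallNintNumerators_le (a := a) hb (mul_nonneg zero_le_two hψ)
  have htwo : (2 : ℝ) ^ s ≤ 2 := by
    simpa using Real.rpow_le_rpow_of_exponent_le one_le_two hs1
  have hpow : (2 * ψ / b) ^ s = 2 ^ s * (ψ / b) ^ s := by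
    rw [mul_div_assoc, Real.mul_rpow zero_le_two hψb]
  have hgcd : (0 : ℝ) ≤ a.gcd b := Nat.cast_nonneg _
  rw [Finset.sum_congr rfl fun q _ => hdiam q, Finset.sum_const, nsmul_eq_mul,
    ← ENNReal.ofReal_natCast, ← ENNReal.ofReal_mul (Nat.cast_nonneg _)]
  refine ENNReal.ofReal_le_ofReal ?_
  rw [hpow]
  calc _ ≤ 4 * (a.gcd b + 2 * ψ * b) * (2 ^ s * (ψ / b) ^ s) :=
        mul_le_mul_of_nonneg_right hcard (by positivity)
    _ ≤ 4 * (2 * (a.gcd b + b * ψ)) * (2 * (ψ / b) ^ s) := by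
        gcongr
        nlinarith
    _ = _ := by ring

theorem stmt14_general (a b : ℕ → ℕ) (hb : ∀ n, 0 < b n)
    (hab : ∀ n, a n ≤ b n)
    (ψ : ℕ → ℝ) (hψ : ∀ n, ψ n ∈ Ioo (0 : ℝ) 1)
    (s : ℝ) (hs0 : 0 < s) (hs1 : s ≤ 1)
    (hsum : Summable (fun n =>
      ((Nat.gcd (a n) (b n) : ℝ) + (b n : ℝ) * ψ n) * (ψ n / (b n : ℝ)) ^ s)) :
    μH[s] {x : ℝ | x ∈ Icc (0 : ℝ) 1 ∧
        ∃ᶠ n in atTop, max (nint ((a n : ℝ) * x)) (nint ((b n : ℝ) * x)) < ψ n} = 0 := by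
  have hψ0 : ∀ n, 0 ≤ ψ n := fun n => (hψ n).1.le
  have hcost : ∑' n, ENNReal.ofReal (16 * (((a n).gcd (b n) + b n * ψ n) * (ψ n / b n) ^ s))
      ≠ ∞ := by
    rw [← ENNReal.ofReal_tsum_of_nonneg (fun n => by have := hψ0 n; positivity)
      (hsum.mul_left 16)]
    exact ENNReal.ofReal_ne_top
  refine le_antisymm ?_ zero_le
  calc _ ≤ μH[s] (limsup (fun n => {x | x ∈ Icc (0 : ℝ) 1 ∧
          max (nint ((a n : ℝ) * x)) (nint ((b n : ℝ) * x)) < ψ n}) atTop) :=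
        measure_mono fun x hx =>
          mem_limsup_iff_frequently_mem.2 (hx.2.mono fun _ h => ⟨hx.1, h⟩)
    _ = 0 := hausdorffMeasure_limsup_eq_zero_s14 hs0 _ _
        (fun n => subset_iUnion_Icc_smallNintNumerators (hb n) (hab n) (ψ n))
        (ne_top_of_le_ne_top hcost (ENNReal.tsum_le_tsum fun n =>
          sum_ediam_Icc_rpow_le (hb n) (hψ0 n) hs0.le hs1))

theorem stmt14 (a b : ℕ → ℕ) (ha : ∀ n, 0 < a n) (hb : ∀ n, 0 < b n)
    (hab : ∀ n, a n ≤ b n)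
    (ψ : ℕ → ℝ) (hψ : ∀ n, ψ n ∈ Ioo (0 : ℝ) 1)
    (s : ℝ) (hs0 : 0 < s) (hs1 : s ≤ 1)
    (hsum : Summable (fun n =>
      ((Nat.gcd (a n) (b n) : ℝ) + (b n : ℝ) * ψ n) * (ψ n / (b n : ℝ)) ^ s)) :
    μH[s] {x : ℝ | x ∈ Icc (0 : ℝ) 1 ∧
        ∃ᶠ n in atTop, max (nint ((a n : ℝ) * x)) (nint ((b n : ℝ) * x)) < ψ n} = 0 :=
  stmt14_general a b hb hab ψ hψ s hs0 hs1 hsum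
end
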